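/- arXiv:math/0311331 — 8 statements merged into one kernel-verified Lean document; each statement's English description precedes it below -/
import Mathlib

section
/- Let 0 ≤ a_1 < a_2 < … < a_r < M and 0 ≤ e_1 < e_2 < … < e_r < M be integers with N − e_i + a_j ≡ 0 (mod 2) for all 1 ≤ i,j ≤ r. Then the generating function with signed weights of all r-tuples of nonintersecting lattice paths of length N in the M-cylinder starting at the points a_1,…,a_r and ending in some permutation of the points e_1,…,e_r equals the determinant det( q(M,N,a_i,e_j;x) )_{i,j=1}^{r}. -/
/-!
Lindström–Gessel–Viennot on the cylinder. Each entry `q(M,N,a_i,e_j;x)` counts all paths from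
`a_i` to `e_j` by their down-steps, so the determinant is the signed sum over all families with an
endpoint permutation, intersecting or not. On an intersecting family, let `k` be the first time at
which two paths meet in `ℤ/Mℤ`, choose such a pair from the positions at time `k` alone, and
exchange the steps of the two paths after time `k`. The positions up to time `k` do not move, so
this is an involution; it preserves the number of down-steps and multiplies the endpoint
permutation by a transposition, so the intersecting families cancel in pairs.
-/

open Finset

attribute [local instance] Classical.propDecidable

/-- The value of a step: `true` encodes a `+1` step, `false` a `-1` step. -/
def stepVal (b : Bool) : ℤ := if b then 1 else -1

/-- The position (in `ℤ`) after `k` steps of the path starting at `a ∈ ℤ`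
with step sequence `s`. -/
def pos {N : ℕ} (a : ℤ) (s : Fin N → Bool) (k : ℕ) : ℤ :=
  a + ∑ i : Fin N, if (i : ℕ) < k then stepVal (s i) else 0

/-- The number of minus-steps of the step sequence `s`. -/
def dcount {N : ℕ} (s : Fin N → Bool) : ℕ :=
  (Finset.univ.filter fun i => s i = false).card

/-- The path with step sequence `s`, starting at `a`, ends at `e` in the `M`-cylinder. -/
def EndsAt (M : ℕ) {N : ℕ} (a : ℤ) (s : Fin N → Bool) (e : ℤ) : Prop :=
  ((pos a s N : ℤ) : ZMod M) = (e : ZMod M)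

/-- The offset of the path with step sequence `s`, starting at `a` and ending at `e`,
in the `M`-cylinder. -/
def offset (M : ℕ) {N : ℕ} (a : ℤ) (s : Fin N → Bool) (e : ℤ) : ℤ :=
  (a + (N : ℤ) - 2 * (dcount s : ℤ) - e) / (M : ℤ)

/-- The `r`-tuple of paths with step sequences `s i`, starting at the points `a i`,
is nonintersecting in the `M`-cylinder. -/
def NonIntersecting (M : ℕ) {N r : ℕ} (a : Fin r → ℤ) (s : Fin r → Fin N → Bool) : Prop :=
  ∀ k ≤ N, ∀ i j : Fin r, i ≠ j →
    ((pos (a i) (s i) k : ℤ) : ZMod M) ≠ ((pos (a j) (s j) k : ℤ) : ZMod M)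

/-- The generating function `q(M,N,a,e;x)`. -/
noncomputable def qx (M N : ℕ) (a e : ℤ) (x : ℂ) : ℂ :=
  ∑ d ∈ Finset.range (N + 1),
    if (M : ℤ) ∣ (a + (N : ℤ) - 2 * (d : ℤ) - e) then (N.choose d : ℂ) * x ^ d else 0

/-- The generating function `q(M,N,a,e;x,y)`. -/
noncomputable def qxy (M N : ℕ) (a e : ℤ) (x y : ℂ) : ℂ :=
  ∑ d ∈ Finset.range (N + 1),
    if (M : ℤ) ∣ (a + (N : ℤ) - 2 * (d : ℤ) - e) then
      (N.choose d : ℂ) * x ^ d * y ^ ((a + (N : ℤ) - 2 * (d : ℤ) - e) / (M : ℤ))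
    else 0

lemma pos_eq_sub_dcount {N : ℕ} (a : ℤ) (s : Fin N → Bool) :
    pos a s N = a + N - 2 * dcount s := by
  have hstep : ∀ i : Fin N, stepVal (s i) = 1 - 2 * if s i = false then 1 else 0 := by
    intro i; cases s i <;> simp [stepVal]
  simp only [pos, Fin.is_lt, if_true, hstep, sum_sub_distrib, ← mul_sum, sum_boole, dcount,
    sum_const, card_univ, Fintype.card_fin, Int.nsmul_eq_mul, mul_one]
  ring

lemma endsAt_iff_dvd {M N : ℕ} (a e : ℤ) (s : Fin N → Bool) :
    EndsAt M a s e ↔ (M : ℤ) ∣ a + N - 2 * dcount s - e := by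
  rw [EndsAt, pos_eq_sub_dcount, ZMod.intCast_eq_intCast_iff_dvd_sub, ← dvd_neg, neg_sub]

lemma sum_comp_dcount {R : Type*} [AddCommMonoid R] (N : ℕ) (g : ℕ → R) :
    ∑ s : Fin N → Bool, g (dcount s) = ∑ d ∈ range (N + 1), N.choose d • g d := by
  calc ∑ s : Fin N → Bool, g (dcount s)
      = ∑ t ∈ (univ : Finset (Fin N)).powerset, g #t :=
        sum_nbij' (fun s => ({i | s i = false} : Finset (Fin N))) (fun t i => decide (i ∉ t))
          (by simp) (by simp) (fun s _ => by ext i; simp) (fun t _ => by ext i; simp)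
          (fun s _ => rfl)
    _ = ∑ d ∈ range (N + 1), N.choose d • g d := by
        rw [sum_powerset_apply_card, card_univ, Fintype.card_fin]

lemma qx_eq_sum_endsAt (M N : ℕ) (a e : ℤ) (x : ℂ) :
    qx M N a e x = ∑ s : Fin N → Bool, if EndsAt M a s e then x ^ dcount s else 0 := by
  simp only [endsAt_iff_dvd]
  rw [sum_comp_dcount N fun d => if (M : ℤ) ∣ a + N - 2 * (d : ℤ) - e then x ^ d else 0, qx]
  refine sum_congr rfl fun d _ => ?_
  split_ifs <;> simp

lemma det_qx_eq_sum_endsAt (M N r : ℕ) (x : ℂ) (a e : Fin r → ℤ) :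
    (Matrix.of fun i j : Fin r => qx M N (a i) (e j) x).det
      = ∑ π : Equiv.Perm (Fin r), ∑ s : Fin r → Fin N → Bool,
          if ∀ j, EndsAt M (a j) (s j) (e (π j)) then
            ((Equiv.Perm.sign π : ℤ) : ℂ) * x ^ (∑ j, dcount (s j)) else 0 := by
  rw [← Matrix.det_transpose, Matrix.det_apply']
  refine sum_congr rfl fun π _ => ?_
  simp only [Matrix.transpose_apply, Matrix.of_apply, qx_eq_sum_endsAt, Fintype.prod_sum,
    mul_sum, Fintype.prod_ite_zero, prod_pow_eq_pow_sum, mul_ite, mul_zero]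

section Splice

variable {N : ℕ}

def splice (k : ℕ) (u v : Fin N → Bool) : Fin N → Bool :=
  fun m => if (m : ℕ) < k then u m else v m

lemma pos_splice_of_le (b : ℤ) (u v : Fin N → Bool) {k m : ℕ} (hm : m ≤ k) :
    pos b (splice k u v) m = pos b u m := by
  unfold pos splice
  congr 1
  refine sum_congr rfl fun i _ => ?_
  split_ifs <;> first | rfl | omega

lemma pos_splice_end (b c : ℤ) (u v : Fin N → Bool) (k : ℕ) :
    pos b (splice k u v) N = pos b u k + (pos c v N - pos c v k) := by
  unfold pos
  rw [add_sub_add_left_eq_sub, ← sum_sub_distrib, add_assoc, ← sum_add_distrib]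
  congr 1
  refine sum_congr rfl fun m _ => ?_
  simp only [splice, m.is_lt, if_true]
  split_ifs <;> simp

end Splice

section CollisionSwap

variable {ι α : Type*} [DecidableEq ι]

-- The choice of the colliding pair depends on `p` alone; this is what makes `meetFlip` below an
-- involution.
noncomputable def collisionSwap (p : ι → α) : Equiv.Perm ι :=
  if h : Function.Injective p then 1
  else
    Equiv.swap (Function.not_injective_iff.mp h).choose
      (Function.not_injective_iff.mp h).choose_spec.choose

lemma collisionSwap_involutive (p : ι → α) : Function.Involutive (collisionSwap p) := by
  unfold collisionSwap
  split_ifs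
  · exact fun _ => rfl
  · exact Equiv.swap_apply_self _ _

lemma comp_swap_of_eq {p : ι → α} {i j : ι} (hij : p i = p j) : p ∘ Equiv.swap i j = p := by
  funext l
  rw [Function.comp_apply, Equiv.swap_apply_def]
  split_ifs with hi hj
  exacts [hi ▸ hij.symm, hj ▸ hij, rfl]

lemma comp_collisionSwap (p : ι → α) : p ∘ collisionSwap p = p := by
  unfold collisionSwap
  split_ifs with h
  · rfl
  · exact comp_swap_of_eq (Function.not_injective_iff.mp h).choose_spec.choose_spec.1

lemma sign_collisionSwap [Fintype ι] {p : ι → α} (h : ¬ Function.Injective p) :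
    Equiv.Perm.sign (collisionSwap p) = -1 := by
  rw [collisionSwap, dif_neg h,
    Equiv.Perm.sign_swap (Function.not_injective_iff.mp h).choose_spec.choose_spec.2]

end CollisionSwap

def cylPos (M : ℕ) {N r : ℕ} (a : Fin r → ℤ) (s : Fin r → Fin N → Bool) (k : ℕ) :
    Fin r → ZMod M :=
  fun l => (pos (a l) (s l) k : ZMod M)

lemma nonIntersecting_iff_injective_cylPos {M N r : ℕ} (a : Fin r → ℤ)
    (s : Fin r → Fin N → Bool) :
    NonIntersecting M a s ↔ ∀ k ≤ N, Function.Injective (cylPos M a s k) := by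
  simp only [NonIntersecting, Function.injective_iff_pairwise_ne]
  rfl

section TailSwap

variable {M N r : ℕ}

def tailSwap (k : ℕ) (τ : Equiv.Perm (Fin r)) (s : Fin r → Fin N → Bool) :
    Fin r → Fin N → Bool :=
  fun l => splice k (s l) (s (τ l))

variable {a : Fin r → ℤ} {k : ℕ} {τ : Equiv.Perm (Fin r)} {s : Fin r → Fin N → Bool}

lemma tailSwap_tailSwap (hτ : Function.Involutive τ) : tailSwap k τ (tailSwap k τ s) = s := by
  funext l m
  simp only [tailSwap, splice, hτ l]
  split_ifs <;> rfl

lemma cylPos_tailSwap_of_le {m : ℕ} (hm : m ≤ k) :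
    cylPos M a (tailSwap k τ s) m = cylPos M a s m :=
  funext fun l => by rw [cylPos, cylPos, tailSwap, pos_splice_of_le _ _ _ hm]

lemma endsAt_tailSwap_iff (hτ : cylPos M a s k ∘ τ = cylPos M a s k) (l : Fin r) (E : ℤ) :
    EndsAt M (a l) (tailSwap k τ s l) E ↔ EndsAt M (a (τ l)) (s (τ l)) E := by
  have hl : (pos (a (τ l)) (s (τ l)) k : ZMod M) = pos (a l) (s l) k := congr_fun hτ l
  rw [EndsAt, EndsAt, tailSwap, pos_splice_end _ (a (τ l)), Int.cast_add, Int.cast_sub, ← hl,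
    add_sub_cancel]

lemma forall_endsAt_tailSwap_iff (hτ : cylPos M a s k ∘ τ = cylPos M a s k) (e : Fin r → ℤ)
    (π : Equiv.Perm (Fin r)) :
    (∀ l, EndsAt M (a l) (tailSwap k τ s l) (e ((π * τ) l))) ↔
      ∀ l, EndsAt M (a l) (s l) (e (π l)) := by
  simp only [endsAt_tailSwap_iff hτ, Equiv.Perm.coe_mul, Function.comp_apply]
  exact τ.forall_congr_right (q := fun l => EndsAt M (a l) (s l) (e (π l)))

lemma sum_dcount_tailSwap : ∑ l, dcount (tailSwap k τ s l) = ∑ l, dcount (s l) := by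
  simp only [dcount, card_filter]
  rw [sum_comm, sum_comm (f := fun l m => if s l m = false then 1 else 0)]
  refine sum_congr rfl fun m _ => ?_
  by_cases hm : (m : ℕ) < k
  · simp [tailSwap, splice, hm]
  · simp only [tailSwap, splice, hm, if_false]
    exact Equiv.sum_comp τ fun l => if s l m = false then 1 else 0

end TailSwap

section FirstMeeting

variable {M N r : ℕ} {a : Fin r → ℤ}

noncomputable def firstMeet (M : ℕ) (a : Fin r → ℤ) (s : Fin r → Fin N → Bool) : ℕ :=
  sInf {k | k ≤ N ∧ ¬ Function.Injective (cylPos M a s k)}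

lemma firstMeet_spec {s : Fin r → Fin N → Bool} (h : ¬ NonIntersecting M a s) :
    firstMeet M a s ≤ N ∧ ¬ Function.Injective (cylPos M a s (firstMeet M a s)) :=
  have hmeet : ∃ k ≤ N, ¬ Function.Injective (cylPos M a s k) := by
    simpa [nonIntersecting_iff_injective_cylPos] using h
  Nat.sInf_mem hmeet

lemma firstMeet_eq_of_cylPos_eq {s t : Fin r → Fin N → Bool} (h : ¬ NonIntersecting M a s)
    (hts : ∀ m ≤ firstMeet M a s, cylPos M a t m = cylPos M a s m) :
    firstMeet M a t = firstMeet M a s := by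
  obtain ⟨hkN, hk⟩ := firstMeet_spec h
  have hmem : firstMeet M a s ∈ {k | k ≤ N ∧ ¬ Function.Injective (cylPos M a t k)} :=
    ⟨hkN, by rwa [hts _ le_rfl]⟩
  have hle : firstMeet M a t ≤ firstMeet M a s := Nat.sInf_le hmem
  obtain ⟨hmN, hm⟩ := Nat.sInf_mem ⟨_, hmem⟩
  exact le_antisymm hle (Nat.sInf_le ⟨hmN, by rwa [← hts _ hle]⟩)

noncomputable def meetSwap (M : ℕ) (a : Fin r → ℤ) (s : Fin r → Fin N → Bool) :
    Equiv.Perm (Fin r) :=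
  collisionSwap (cylPos M a s (firstMeet M a s))

noncomputable def meetFlip (M : ℕ) (a : Fin r → ℤ) (s : Fin r → Fin N → Bool) :
    Fin r → Fin N → Bool :=
  tailSwap (firstMeet M a s) (meetSwap M a s) s

variable {s : Fin r → Fin N → Bool}

lemma sign_meetSwap (h : ¬ NonIntersecting M a s) : Equiv.Perm.sign (meetSwap M a s) = -1 :=
  sign_collisionSwap (firstMeet_spec h).2

lemma cylPos_meetFlip_of_le {m : ℕ} (hm : m ≤ firstMeet M a s) :
    cylPos M a (meetFlip M a s) m = cylPos M a s m :=
  cylPos_tailSwap_of_le hm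

lemma not_nonIntersecting_meetFlip (h : ¬ NonIntersecting M a s) :
    ¬ NonIntersecting M a (meetFlip M a s) := by
  rw [nonIntersecting_iff_injective_cylPos]
  intro hinj
  apply (firstMeet_spec h).2
  rw [← cylPos_meetFlip_of_le le_rfl]
  exact hinj _ (firstMeet_spec h).1

lemma firstMeet_meetFlip (h : ¬ NonIntersecting M a s) :
    firstMeet M a (meetFlip M a s) = firstMeet M a s :=
  firstMeet_eq_of_cylPos_eq h fun _ hm => cylPos_meetFlip_of_le hm

lemma meetSwap_meetFlip (h : ¬ NonIntersecting M a s) :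
    meetSwap M a (meetFlip M a s) = meetSwap M a s := by
  rw [meetSwap, firstMeet_meetFlip h, cylPos_meetFlip_of_le le_rfl, meetSwap]

lemma meetFlip_meetFlip (h : ¬ NonIntersecting M a s) :
    meetFlip M a (meetFlip M a s) = s := by
  rw [meetFlip, meetSwap_meetFlip h, firstMeet_meetFlip h, meetFlip]
  exact tailSwap_tailSwap (collisionSwap_involutive _)

lemma forall_endsAt_meetFlip_iff (e : Fin r → ℤ) (π : Equiv.Perm (Fin r)) :
    (∀ l, EndsAt M (a l) (meetFlip M a s l) (e ((π * meetSwap M a s) l))) ↔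
      ∀ l, EndsAt M (a l) (s l) (e (π l)) :=
  forall_endsAt_tailSwap_iff (comp_collisionSwap _) e π

end FirstMeeting

theorem sum_not_nonIntersecting_eq_zero {R : Type*} [CommRing R] {M N r : ℕ} (a e : Fin r → ℤ)
    (x : R) :
    ∑ p ∈ univ.filter (fun p : Equiv.Perm (Fin r) × (Fin r → Fin N → Bool) =>
        ¬ NonIntersecting M a p.2),
      (if ∀ j, EndsAt M (a j) (p.2 j) (e (p.1 j)) then
        ((Equiv.Perm.sign p.1 : ℤ) : R) * x ^ (∑ j, dcount (p.2 j)) else 0) = 0 := by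
  refine sum_involution (fun p _ => (p.1 * meetSwap M a p.2, meetFlip M a p.2)) ?_ ?_ ?_ ?_
  · rintro ⟨π, s⟩ hs
    simp only [forall_endsAt_meetFlip_iff]
    rw [meetFlip, sum_dcount_tailSwap, map_mul, sign_meetSwap (mem_filter.mp hs).2]
    split_ifs <;> push_cast <;> ring
  · rintro ⟨π, s⟩ hs - heq
    have hsign := sign_meetSwap (mem_filter.mp hs).2
    have hone : meetSwap M a s = 1 := mul_eq_left.mp (congrArg Prod.fst heq)
    rw [hone, map_one] at hsign
    exact absurd hsign (by decide)
  · rintro ⟨π, s⟩ hs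
    exact mem_filter.mpr ⟨mem_univ _, not_nonIntersecting_meetFlip (mem_filter.mp hs).2⟩
  · rintro ⟨π, s⟩ hs
    have h := (mem_filter.mp hs).2
    ext1
    · rw [meetSwap_meetFlip h, mul_assoc, mul_eq_left]
      exact Equiv.ext (collisionSwap_involutive _)
    · exact meetFlip_meetFlip h

theorem stmt1_general (M : ℕ) (N r : ℕ) (x : ℂ) (a e : Fin r → ℤ) :
    (∑ π : Equiv.Perm (Fin r), ∑ s : Fin r → Fin N → Bool,
        if NonIntersecting M a s ∧ ∀ j, EndsAt M (a j) (s j) (e (π j)) then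
          ((Equiv.Perm.sign π : ℤ) : ℂ) * x ^ (∑ j, dcount (s j))
        else 0)
      = Matrix.det (Matrix.of fun i j : Fin r => qx M N (a i) (e j) x) := by
  simp only [ite_and]
  rw [det_qx_eq_sum_endsAt, ← Fintype.sum_prod_type', ← Fintype.sum_prod_type', ← sum_filter,
    ← sum_filter_add_sum_filter_not univ fun p => NonIntersecting M a p.2,
    sum_not_nonIntersecting_eq_zero, add_zero]

/-- the generating function with signed weights of all `r`-tuples of
nonintersecting lattice paths of length `N` in the `M`-cylinder, starting at the points
`a 1, …, a r` and ending in some permutation of the points `e 1, …, e r`, equals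
`det (q(M,N,a i,e j;x))`. -/
theorem stmt1 (M : ℕ) (hM : 3 ≤ M) (N r : ℕ) (x : ℂ) (a e : Fin r → ℤ)
    (ha0 : ∀ i, 0 ≤ a i) (haM : ∀ i, a i < M) (hamono : StrictMono a)
    (he0 : ∀ i, 0 ≤ e i) (heM : ∀ i, e i < M) (hemono : StrictMono e)
    (hpar : ∀ i j : Fin r, (2 : ℤ) ∣ ((N : ℤ) - e i + a j)) :
    (∑ π : Equiv.Perm (Fin r), ∑ s : Fin r → Fin N → Bool,
        if NonIntersecting M a s ∧ ∀ j, EndsAt M (a j) (s j) (e (π j)) then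
          ((Equiv.Perm.sign π : ℤ) : ℂ) * x ^ (∑ j, dcount (s j))
        else 0)
      = Matrix.det (Matrix.of fun i j : Fin r => qx M N (a i) (e j) x) :=
  stmt1_general M N r x a e
end

section
/- Let M ≥ 1 and N ≥ 0 be integers, a, e ∈ ℤ, x ∈ ℂ, and let z be a nonzero complex number. Then, summing over those 0 ≤ d ≤ N with a + N − 2d ≡ e (mod M), Σ_{d} C(N,d) x^d (z^M)^{(a+N−2d−e)/M} = (z^{a−e}/M) · Σ_{l=0}^{M−1} exp(−2πi(e−a)l/M) · ( x z^{−1} exp(−2πil/M) + z exp(2πil/M) )^N. -/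
open Finset Complex Real

/-- with `y = z^M`, the generating function `q(M,N,a,e;x,y)` equals
`(z^(a-e)/M) ⬝ ∑_{l=0}^{M-1} exp(-2πi(e-a)l/M) (x z⁻¹ exp(-2πil/M) + z exp(2πil/M))^N`. -/
theorem stmt8 (M : ℕ) (hM : 1 ≤ M) (N : ℕ) (a e : ℤ) (x z : ℂ) (hz : z ≠ 0) :
    qxy M N a e x (z ^ M)
      = z ^ (a - e) / (M : ℂ) *
          ∑ l ∈ Finset.range M,
            Complex.exp (-2 * Real.pi * Complex.I * ((e : ℂ) - (a : ℂ)) * l / M) *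
              (x * z⁻¹ * Complex.exp (-2 * Real.pi * Complex.I * l / M) +
                z * Complex.exp (2 * Real.pi * Complex.I * l / M)) ^ N := by
  have hM0 : M ≠ 0 := by omega
  have hMC : (M:ℂ) ≠ 0 := Nat.cast_ne_zero.mpr hM0
  set ζ : ℂ := Complex.exp (2 * Real.pi * Complex.I / M) with hζdef
  have hζ0 : ζ ≠ 0 := Complex.exp_ne_zero _
  have hprim := Complex.isPrimitiveRoot_exp M hM0
  -- key per-l expansion
  have key : ∀ l : ℕ,
      Complex.exp (-2 * Real.pi * Complex.I * ((e : ℂ) - (a : ℂ)) * l / M) *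
        (x * z⁻¹ * Complex.exp (-2 * Real.pi * Complex.I * l / M) +
          z * Complex.exp (2 * Real.pi * Complex.I * l / M)) ^ N
      = ∑ d ∈ Finset.range (N+1),
          (N.choose d : ℂ) * x ^ d * z ^ ((N:ℤ) - 2*d) *
            (ζ ^ (a + (N:ℤ) - 2*d - e)) ^ l := by
    intro l
    have e1 : Complex.exp (2 * Real.pi * Complex.I * l / M) = ζ ^ (l:ℤ) := by
      rw [hζdef, ← Complex.exp_int_mul]; congr 1; push_cast; ring
    have e2 : Complex.exp (-2 * Real.pi * Complex.I * l / M) = ζ ^ (-(l:ℤ)) := by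
      rw [hζdef, ← Complex.exp_int_mul]; congr 1; push_cast; ring
    have e3 : Complex.exp (-2 * Real.pi * Complex.I * ((e : ℂ) - (a : ℂ)) * l / M)
        = ζ ^ ((a - e) * l) := by
      rw [hζdef, ← Complex.exp_int_mul]; congr 1; push_cast; ring
    rw [e1, e2, e3, add_pow, Finset.mul_sum]
    refine Finset.sum_congr rfl fun d hd => ?_
    have hdN : d ≤ N := by simpa [Finset.mem_range, Nat.lt_succ_iff] using hd
    have hNd : ((N - d : ℕ) : ℤ) = (N:ℤ) - d := by push_cast [hdN]; ring
    rw [mul_pow, mul_pow, mul_pow]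
    have h1 : z⁻¹ ^ d = z ^ (-(d:ℤ)) := by
      rw [inv_pow, ← zpow_natCast, ← zpow_neg]
    have h2 : (ζ ^ (-(l:ℤ))) ^ d = ζ ^ ((l:ℤ) * (-(d:ℤ))) := by
      rw [← zpow_natCast, ← zpow_mul]; congr 1; ring
    have h3 : z ^ (N - d) = z ^ ((N:ℤ) - d) := by rw [← zpow_natCast, hNd]
    have h4 : (ζ ^ ((l:ℤ))) ^ (N - d) = ζ ^ ((l:ℤ) * ((N:ℤ) - d)) := by
      rw [← zpow_natCast, ← zpow_mul, hNd]
    rw [h1, h2, h3, h4]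
    have hzc : z ^ (-(d:ℤ)) * z ^ ((N:ℤ) - d) = z ^ ((N:ℤ) - 2*d) := by
      rw [← zpow_add₀ hz]; congr 1; ring
    have hζc : ζ ^ ((a - e) * (l:ℤ)) * (ζ ^ ((l:ℤ) * (-(d:ℤ))) * ζ ^ ((l:ℤ) * ((N:ℤ) - d)))
        = (ζ ^ (a + (N:ℤ) - 2*d - e)) ^ (l:ℤ) := by
      rw [← zpow_add₀ hζ0, ← zpow_add₀ hζ0, ← zpow_mul]; congr 1; ring
    calc ζ ^ ((a - e) * (l:ℤ)) *
          (x ^ d * z ^ (-(d:ℤ)) * ζ ^ ((l:ℤ) * (-(d:ℤ))) *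
            (z ^ ((N:ℤ) - d) * ζ ^ ((l:ℤ) * ((N:ℤ) - d))) * (N.choose d : ℂ))
        = (N.choose d : ℂ) * x ^ d * (z ^ (-(d:ℤ)) * z ^ ((N:ℤ) - d)) *
            (ζ ^ ((a - e) * (l:ℤ)) * (ζ ^ ((l:ℤ) * (-(d:ℤ))) * ζ ^ ((l:ℤ) * ((N:ℤ) - d)))) := by
          ring
      _ = (N.choose d : ℂ) * x ^ d * z ^ ((N:ℤ) - 2*d) * (ζ ^ (a + (N:ℤ) - 2*d - e)) ^ l := by
          rw [hzc, hζc, zpow_natCast]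
  rw [Finset.sum_congr rfl fun l _ => key l, Finset.sum_comm]
  rw [Finset.mul_sum]
  unfold qxy
  refine Finset.sum_congr rfl fun d hd => ?_
  have hgeom : ∑ l ∈ Finset.range M, (ζ ^ (a + (N:ℤ) - 2*d - e)) ^ l
      = if (M:ℤ) ∣ (a + (N:ℤ) - 2 * d - e) then (M:ℂ) else 0 := by
    by_cases h : (M:ℤ) ∣ (a + (N:ℤ) - 2 * d - e)
    · rw [if_pos h, (hprim.zpow_eq_one_iff_dvd _).mpr h]
      simp
    · rw [if_neg h]
      have hne : ζ ^ (a + (N:ℤ) - 2*d - e) ≠ 1 := fun hc =>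
        h ((hprim.zpow_eq_one_iff_dvd _).mp hc)
      rw [geom_sum_eq hne]
      have : (ζ ^ (a + (N:ℤ) - 2*d - e)) ^ M = 1 := by
        rw [← zpow_natCast, ← zpow_mul, mul_comm, zpow_mul, zpow_natCast,
          hprim.pow_eq_one, one_zpow]
      simp [this]
  rw [← Finset.mul_sum, hgeom]
  by_cases h : (M:ℤ) ∣ (a + (N:ℤ) - 2 * d - e)
  · rw [if_pos h, if_pos h]
    have hMZ : (M:ℤ) ≠ 0 := Int.natCast_ne_zero.mpr hM0
    rcases h with ⟨c, hc⟩
    have hdiv : (a + (N:ℤ) - 2*d - e) / (M:ℤ) = c := by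
      rw [hc, Int.mul_ediv_cancel_left _ hMZ]
    rw [hdiv]
    have hzM : (z ^ M : ℂ) ^ c = z ^ (a + (N:ℤ) - 2*d - e) := by
      rw [← zpow_natCast z M, ← zpow_mul, ← hc]
    rw [hzM]
    have hsplit : z ^ (a + (N:ℤ) - 2*d - e) = z ^ (a - e) * z ^ ((N:ℤ) - 2*d) := by
      rw [← zpow_add₀ hz]; congr 1; ring
    rw [hsplit]
    field_simp
  · simp [h]
end

section
/- Let M ≥ 1, N ≥ 0 and r ≥ 1 be integers, x ∈ ℂ, and let a_1,…,a_r and e_1,…,e_r be integers with 0 ≤ a_1 < … < a_r < M, 0 ≤ e_1 < … < e_r < M, and N − e_i + a_j ≡ 0 (mod 2) for all 1 ≤ i,j ≤ r. Then det( q(M,N,a_i,e_j; x, (−1)^{r−1}) )_{i,j=1}^{r} = M^{−r} · det( exp((r−1)πi(a_i−e_j)/M) · Σ_{l=0}^{M−1} exp(−2πi(e_j−a_i)l/M) · ( x·exp(−2πi(l+(r−1)/2)/M) + exp(2πi(l+(r−1)/2)/M) )^N )_{i,j=1}^{r}. -/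
open Finset Complex Real

/-!
Put `ζ = exp (2πi/M)` and `c = exp (π i (r-1)/M)`, so that `c ^ M = (-1) ^ (r-1)` and the numbers
`u_l = ζ^l c` (`l < M`) are the `M`-th roots of `(-1) ^ (r-1)`; the exponentials in each entry on the
right are `u_l ^ (a-e) * (x u_l⁻¹ + u_l) ^ N`. Expanding binomially, the sum over `l` is
`∑_d C(N,d) x^d ∑_l u_l ^ (a+N-2d-e)`, and the roots-of-unity filter keeps exactly the exponents
`K` divisible by `M`, each contributing `M (c^M)^(K/M)`. So every entry on the right is `M` times the
corresponding `q`, and the determinant picks up the factor `M ^ r`.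
-/

theorem IsPrimitiveRoot.sum_range_pow_mul_zpow {F : Type*} [Field F] {ζ : F} {M : ℕ}
    (hζ : IsPrimitiveRoot ζ M) (c : F) (K : ℤ) :
    ∑ l ∈ range M, (ζ ^ l * c) ^ K = if (M : ℤ) ∣ K then M * (c ^ M) ^ (K / M) else 0 := by
  have hpow (l : ℕ) : (ζ ^ l * c) ^ K = (ζ ^ K) ^ l * c ^ K := by
    rw [mul_zpow, ← zpow_natCast, ← zpow_natCast, ← zpow_mul, ← zpow_mul, mul_comm (l : ℤ)]
  simp_rw [hpow, ← sum_mul]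
  split_ifs with hK
  · obtain ⟨k, rfl⟩ := hK
    rcases M.eq_zero_or_pos with rfl | hM
    · simp
    rw [(hζ.zpow_eq_one_iff_dvd _).mpr ⟨k, rfl⟩, Int.mul_ediv_cancel_left _ (by omega), zpow_mul,
      zpow_natCast]
    simp
  · have hζK : ζ ^ K ≠ 1 := by rwa [Ne, hζ.zpow_eq_one_iff_dvd]
    rw [geom_sum_eq hζK, ← zpow_natCast, ← zpow_mul, mul_comm K, zpow_mul, hζ.zpow_eq_one]
    simp

theorem natCast_mul_qxy_eq_sum {ζ c : ℂ} {M : ℕ} (hζ : IsPrimitiveRoot ζ M) (hc : c ≠ 0)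
    (N : ℕ) (a e : ℤ) (x : ℂ) :
    M * qxy M N a e x (c ^ M) =
      ∑ l ∈ range M, (ζ ^ l * c) ^ (a - e) * (x * (ζ ^ l * c)⁻¹ + ζ ^ l * c) ^ N := by
  have hu {l : ℕ} (hl : l ∈ range M) : ζ ^ l * c ≠ 0 :=
    mul_ne_zero (pow_ne_zero _ (hζ.ne_zero (by simp at hl; omega))) hc
  have hexpand {u : ℂ} (hu : u ≠ 0) : u ^ (a - e) * (x * u⁻¹ + u) ^ N =
      ∑ d ∈ range (N + 1), N.choose d * x ^ d * u ^ (a + N - 2 * d - e) := by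
    rw [add_pow, mul_sum]
    refine sum_congr rfl fun d hd => ?_
    have hdN : d ≤ N := Nat.lt_succ_iff.mp (mem_range.mp hd)
    have : u ^ (a + N - 2 * d - e) = u ^ (a - e) * (u⁻¹) ^ d * u ^ (N - d) := by
      rw [← zpow_natCast, ← zpow_natCast, inv_zpow', ← zpow_add₀ hu, ← zpow_add₀ hu]
      congr 1; push_cast [hdN]; ring
    rw [this, mul_pow]; ring
  rw [sum_congr rfl fun l hl => hexpand (hu hl), sum_comm, qxy, mul_sum]
  refine sum_congr rfl fun d _ => ?_
  rw [← mul_sum, hζ.sum_range_pow_mul_zpow]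
  split_ifs <;> ring

theorem exp_pi_mul_I_pred_div_pow {M r : ℕ} (hM : M ≠ 0) (hr : 1 ≤ r) :
    exp (((r : ℂ) - 1) * π * I / M) ^ M = (-1) ^ (r - 1) := by
  rw [← Complex.exp_nat_mul, ← exp_pi_mul_I, ← Complex.exp_nat_mul]
  congr 1
  push_cast [hr]
  field_simp

theorem natCast_mul_qxy_neg_one_pow {M : ℕ} (hM : M ≠ 0) (N : ℕ) {r : ℕ} (hr : 1 ≤ r)
    (a e : ℤ) (x : ℂ) :
    M * qxy M N a e x ((-1 : ℂ) ^ (r - 1)) =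
      exp (((r : ℂ) - 1) * π * I * ((a : ℂ) - (e : ℂ)) / M) *
        ∑ l ∈ range M, exp (-2 * π * I * ((e : ℂ) - (a : ℂ)) * l / M) *
          (x * exp (-2 * π * I * ((l : ℂ) + ((r : ℂ) - 1) / 2) / M) +
            exp (2 * π * I * ((l : ℂ) + ((r : ℂ) - 1) / 2) / M)) ^ N := by
  rw [← exp_pi_mul_I_pred_div_pow hM hr,
    natCast_mul_qxy_eq_sum (isPrimitiveRoot_exp M hM) (exp_ne_zero _), mul_sum]
  refine sum_congr rfl fun l _ => ?_
  have hu : exp (2 * π * I / M) ^ l * exp (((r : ℂ) - 1) * π * I / M) =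
      exp (2 * π * I * ((l : ℂ) + ((r : ℂ) - 1) / 2) / M) := by
    rw [← Complex.exp_nat_mul, ← Complex.exp_add]; congr 1; ring
  rw [hu, ← Complex.exp_neg, ← exp_int_mul, ← mul_assoc, ← Complex.exp_add]
  congr 1
  · congr 1; push_cast; ring
  · simp only [neg_mul, neg_div]

theorem stmt9_general (M : ℕ) (hM : 1 ≤ M) (N r : ℕ) (hr : 1 ≤ r) (x : ℂ) (a e : Fin r → ℤ) :
    Matrix.det (Matrix.of fun i j : Fin r => qxy M N (a i) (e j) x ((-1 : ℂ) ^ (r - 1)))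
      = ((M : ℂ)) ^ (-(r : ℤ)) *
          Matrix.det (Matrix.of fun i j : Fin r =>
            Complex.exp (((r : ℂ) - 1) * Real.pi * Complex.I * ((a i : ℂ) - (e j : ℂ)) / M) *
              ∑ l ∈ Finset.range M,
                Complex.exp (-2 * Real.pi * Complex.I * ((e j : ℂ) - (a i : ℂ)) * l / M) *
                  (x * Complex.exp (-2 * Real.pi * Complex.I * ((l : ℂ) + ((r : ℂ) - 1) / 2) / M) +
                    Complex.exp (2 * Real.pi * Complex.I * ((l : ℂ) + ((r : ℂ) - 1) / 2) / M)) ^ N) := by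
  have hM0 : M ≠ 0 := by omega
  simp_rw [← natCast_mul_qxy_neg_one_pow hM0 N hr]
  rw [show (Matrix.of fun i j : Fin r => (M : ℂ) * qxy M N (a i) (e j) x ((-1) ^ (r - 1))) =
      (M : ℂ) • Matrix.of fun i j => qxy M N (a i) (e j) x ((-1) ^ (r - 1)) from rfl,
    Matrix.det_smul, Fintype.card_fin, zpow_neg, zpow_natCast,
    inv_mul_cancel_left₀ (pow_ne_zero r (Nat.cast_ne_zero.mpr hM0))]

/-- the determinant `det (q(M,N,a i,e j;x,(-1)^(r-1)))` equals the
trigonometric determinant of equation (eq:det-gfxr). -/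
theorem stmt9 (M : ℕ) (hM : 1 ≤ M) (N r : ℕ) (hr : 1 ≤ r) (x : ℂ) (a e : Fin r → ℤ)
    (ha0 : ∀ i, 0 ≤ a i) (haM : ∀ i, a i < M) (hamono : StrictMono a)
    (he0 : ∀ i, 0 ≤ e i) (heM : ∀ i, e i < M) (hemono : StrictMono e)
    (hpar : ∀ i j : Fin r, (2 : ℤ) ∣ ((N : ℤ) - e i + a j)) :
    Matrix.det (Matrix.of fun i j : Fin r => qxy M N (a i) (e j) x ((-1 : ℂ) ^ (r - 1)))
      = ((M : ℂ)) ^ (-(r : ℤ)) *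
          Matrix.det (Matrix.of fun i j : Fin r =>
            Complex.exp (((r : ℂ) - 1) * Real.pi * Complex.I * ((a i : ℂ) - (e j : ℂ)) / M) *
              ∑ l ∈ Finset.range M,
                Complex.exp (-2 * Real.pi * Complex.I * ((e j : ℂ) - (a i : ℂ)) * l / M) *
                  (x * Complex.exp (-2 * Real.pi * Complex.I * ((l : ℂ) + ((r : ℂ) - 1) / 2) / M) +
                    Complex.exp (2 * Real.pi * Complex.I * ((l : ℂ) + ((r : ℂ) - 1) / 2) / M)) ^ N) :=
  stmt9_general M hM N r hr x a e
end

section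
/- For every integer r ≥ 1, the determinant of the r×r complex matrix with (i,j)-entry exp(−2πi·i·j/r), row and column indices ranging over 0 ≤ i,j ≤ r−1, equals r^{r/2} · i^{(r+2)(r−1)/2}, where i is the imaginary unit (and r^{r/2} denotes the positive real (r/2)-th power of r). -/
open Finset Complex Real

lemma exp_sub_exp' (d : ℝ) : Complex.exp ((d:ℂ)*Complex.I) - Complex.exp (-(d:ℂ)*Complex.I)
    = 2*(Real.sin d : ℂ)*Complex.I := by
  rw [Complex.exp_mul_I, Complex.exp_mul_I, Complex.cos_neg, Complex.sin_neg,
    ← Complex.ofReal_sin]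
  ring

lemma expfac (a b : ℝ) : Complex.exp (a*Complex.I) - Complex.exp (b*Complex.I)
    = Complex.exp ((((a+b)/2 : ℝ) : ℂ)*Complex.I) * (2*Real.sin ((b-a)/2)) * (-Complex.I) := by
  have key := exp_sub_exp' ((a-b)/2)
  have h1 : (a:ℂ)*Complex.I = (((a+b)/2 : ℝ):ℂ)*Complex.I + (((a-b)/2:ℝ):ℂ)*Complex.I := by
    push_cast; ring
  have h2 : (b:ℂ)*Complex.I = (((a+b)/2 : ℝ):ℂ)*Complex.I + (-(((a-b)/2:ℝ):ℂ))*Complex.I := by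
    push_cast; ring
  have hs : Real.sin ((b-a)/2) = - Real.sin ((a-b)/2) := by
    rw [← Real.sin_neg]; ring_nf
  rw [h1, h2, Complex.exp_add, Complex.exp_add, ← mul_sub, key, hs]
  push_cast; ring

lemma abs_one_sub_exp (θ : ℝ) (h0 : 0 < θ) (h1 : θ < 2*π) :
    ‖1 - Complex.exp ((θ:ℂ)*Complex.I)‖ = 2 * Real.sin (θ/2) := by
  have := expfac 0 θ
  simp only [Complex.ofReal_zero, zero_mul, Complex.exp_zero] at this
  rw [this]
  have hsin : 0 ≤ Real.sin ((θ-0)/2) := by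
    apply le_of_lt
    apply Real.sin_pos_of_pos_of_lt_pi <;> [linarith; linarith]
  rw [norm_mul, norm_mul, Complex.norm_exp_ofReal_mul_I]
  simp only [norm_neg, Complex.norm_I]
  rw [show ((2:ℂ) * ↑(Real.sin ((θ-0)/2)) : ℂ) = ((2 * Real.sin ((θ-0)/2) : ℝ) : ℂ) by push_cast; ring]
  rw [Complex.norm_real, Real.norm_eq_abs, _root_.abs_of_nonneg (by linarith [hsin] : (0:ℝ) ≤ 2 * Real.sin ((θ-0)/2))]
  norm_num

lemma sinprod (r : ℕ) (hr : 1 ≤ r) :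
    ∏ k ∈ Finset.range (r-1), (2 * Real.sin (π*(k+1)/r)) = r := by
  have hrC : ((r:ℂ)) ≠ 0 := Nat.cast_ne_zero.mpr (by omega)
  have hprim : IsPrimitiveRoot (Complex.exp (2*π*Complex.I/r)) ((r-1)+1) := by
    have := Complex.isPrimitiveRoot_exp r (by omega)
    rwa [show (r-1)+1 = r by omega]
  have key := hprim.prod_one_sub_pow_eq_order
  have habs := congrArg (fun z : ℂ => ‖z‖) key
  simp only [norm_prod] at habs
  have hterm : ∀ k ∈ Finset.range (r-1),
      ‖1 - Complex.exp (2*π*Complex.I/r) ^ (k+1)‖ = 2*Real.sin (π*(k+1)/r) := by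
    intro k hk
    rw [Finset.mem_range] at hk
    have hrR : (0:ℝ) < r := by positivity
    have hexp : Complex.exp (2*π*Complex.I/r) ^ (k+1)
        = Complex.exp (((2*π*(k+1)/r : ℝ):ℂ)*Complex.I) := by
      rw [← Complex.exp_nat_mul]
      congr 1
      push_cast
      ring
    rw [hexp, abs_one_sub_exp]
    · congr 1; field_simp
    · positivity
    · rw [div_lt_iff₀ hrR]
      have : (k:ℝ)+1 < r := by exact_mod_cast (by omega : k+1 < r)
      nlinarith [Real.pi_pos]
  rw [Finset.prod_congr rfl hterm] at habs
  rw [habs]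
  push_cast [show ((r-1:ℕ):ℂ) = (r:ℂ)-1 by push_cast [Nat.cast_sub hr]; ring]
  rw [show (r:ℂ)-1+1 = (r:ℂ) by ring]
  simp

lemma partA (r : ℕ) (hr : 1 ≤ r) :
    (∏ i ∈ Finset.range r, ∏ k ∈ Finset.range (r-1-i), (2 * Real.sin (π*(k+1)/r)))
      = (r:ℝ) ^ ((r:ℝ)/2) := by
  have hrR : (0:ℝ) < r := by positivity
  have hsin : ∀ k : ℕ, k + 1 < r → 0 < Real.sin (π*(k+1)/r) := by
    intro k hk
    apply Real.sin_pos_of_pos_of_lt_pi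
    · positivity
    · rw [div_lt_iff₀ hrR]
      have : (k:ℝ)+1 < r := by exact_mod_cast hk
      nlinarith [Real.pi_pos]
  have hpos : ∀ t, t < r → 0 ≤ ∏ k ∈ Finset.range t, (2 * Real.sin (π*(k+1)/r)) := by
    intro t ht
    apply Finset.prod_nonneg
    intro k hk
    rw [Finset.mem_range] at hk
    have := hsin k (by omega)
    linarith
  have hpair : ∀ t, t < r →
      (∏ k ∈ Finset.range t, (2 * Real.sin (π*(k+1)/r)))
        * ∏ k ∈ Finset.range (r-1-t), (2 * Real.sin (π*(k+1)/r)) = r := by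
    intro t ht
    have hsplit : (∏ k ∈ Finset.range (r-1), (2 * Real.sin (π*(k+1)/r)))
        = (∏ k ∈ Finset.range t, (2 * Real.sin (π*(k+1)/r)))
          * ∏ k ∈ Finset.range (r-1-t), (2 * Real.sin (π*(((t+k:ℕ):ℝ)+1)/r)) := by
      have key := Finset.prod_range_add (fun k => 2 * Real.sin (π*((k:ℝ)+1)/r)) t (r-1-t)
      rw [show t + (r-1-t) = r-1 by omega] at key
      exact key
    have htail : (∏ k ∈ Finset.range (r-1-t), (2 * Real.sin (π*(((t+k:ℕ):ℝ)+1)/r)))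
        = ∏ k ∈ Finset.range (r-1-t), (2 * Real.sin (π*(k+1)/r)) := by
      have hterm : ∀ k ∈ Finset.range (r-1-t), (2 * Real.sin (π*(((t+k:ℕ):ℝ)+1)/r))
          = 2 * Real.sin (π*((((r-1-t)-1-k : ℕ):ℝ)+1)/r) := by
        intro k hk
        rw [Finset.mem_range] at hk
        have h1 : (t+k+1) + (((r-1-t)-1-k)+1) = r := by omega
        have hc : ((t+k:ℕ):ℝ) + 1 + ((((r-1-t)-1-k : ℕ):ℝ) + 1) = r := by
          exact_mod_cast congrArg (Nat.cast : ℕ → ℝ) h1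
        have harg : π*(((t+k:ℕ):ℝ)+1)/r = π - π*((((r-1-t)-1-k : ℕ):ℝ)+1)/r := by
          push_cast at hc ⊢
          rw [eq_sub_iff_add_eq, ← add_div, div_eq_iff (ne_of_gt hrR)]
          linear_combination π * hc
        rw [harg, Real.sin_pi_sub]
      rw [Finset.prod_congr rfl hterm]
      exact Finset.prod_range_reflect (fun k => 2 * Real.sin (π*((k:ℝ)+1)/r)) (r-1-t)
    rw [htail] at hsplit
    rw [← hsplit]
    exact sinprod r hr
  have hrefl : (∏ i ∈ Finset.range r, ∏ k ∈ Finset.range (r-1-i), (2 * Real.sin (π*(k+1)/r)))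
      = ∏ i ∈ Finset.range r, ∏ k ∈ Finset.range i, (2 * Real.sin (π*(k+1)/r)) :=
    Finset.prod_range_reflect (fun t => ∏ k ∈ Finset.range t, (2 * Real.sin (π*((k:ℝ)+1)/r))) r
  rw [hrefl]
  set P := ∏ i ∈ Finset.range r, ∏ k ∈ Finset.range i, (2 * Real.sin (π*((k:ℝ)+1)/r)) with hP
  have hPsq : P * P = (r:ℝ)^(r:ℕ) := by
    nth_rewrite 2 [hP]
    rw [← hrefl, ← Finset.prod_mul_distrib,
      Finset.prod_congr rfl (fun t ht => (mul_comm _ _).trans (hpair t (Finset.mem_range.mp ht))),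
      Finset.prod_const, Finset.card_range]
  have hPnn : 0 ≤ P :=
    Finset.prod_nonneg (fun i hi => hpos i (Finset.mem_range.mp hi))
  have hPval : P = Real.sqrt ((r:ℝ)^(r:ℕ)) := by
    rw [← hPsq, Real.sqrt_mul_self hPnn]
  rw [hPval, Real.sqrt_eq_rpow, ← Real.rpow_natCast ((r:ℝ)) r, ← Real.rpow_mul (le_of_lt hrR)]
  congr 1
  ring

lemma aux_split (r : ℕ) (f : ℕ → ℕ → ℂ) :
    ∑ i ∈ Finset.range (r+1), ∑ k ∈ Finset.range (r-i), f i (i+1+k)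
      = (∑ i ∈ Finset.range r, ∑ k ∈ Finset.range (r-1-i), f i (i+1+k))
        + ∑ i ∈ Finset.range r, f i r := by
  rw [Finset.sum_range_succ]
  simp only [Nat.sub_self, Finset.range_zero, Finset.sum_empty, add_zero]
  rw [← Finset.sum_add_distrib]
  refine Finset.sum_congr rfl (fun i hi => ?_)
  rw [Finset.mem_range] at hi
  rw [show r - i = (r-1-i)+1 by omega, Finset.sum_range_succ, show i+1+(r-1-i) = r by omega]

lemma gaussC (r : ℕ) : ∑ i ∈ Finset.range r, (i:ℂ) = (r:ℂ)*((r:ℂ)-1)/2 := by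
  induction r with
  | zero => simp
  | succ n ih => rw [Finset.sum_range_succ, ih]; push_cast; ring

lemma aux_gauss (r : ℕ) :
    (∑ i ∈ Finset.range r, ∑ k ∈ Finset.range (r-1-i), ((i:ℂ) + ((i+1+k : ℕ):ℂ)))
      = (r:ℂ)*((r:ℂ)-1)^2/2 := by
  induction r with
  | zero => simp
  | succ n ih =>
    simp only [Nat.add_sub_cancel]
    rw [aux_split n (fun a b => (a:ℂ) + (b:ℂ)), ih]
    rw [Finset.sum_add_distrib, gaussC, Finset.sum_const, Finset.card_range]
    push_cast
    ring

lemma partI (r : ℕ) (hr : 1 ≤ r) :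
    (-Complex.I)^((∑ i ∈ Finset.range r, (r-1-i)) + (r-1)^2)
      = Complex.I^(((r + 2) * (r - 1)) / 2) := by
  set M := (∑ i ∈ Finset.range r, (r-1-i)) + (r-1)^2 with hM
  set K := ((r + 2) * (r - 1)) / 2 with hK
  have hdvd : 4 ∣ M + K := by
    obtain ⟨s, rfl⟩ : ∃ s, r = s + 1 := ⟨r - 1, by omega⟩
    rw [hM, hK]
    simp only [Nat.add_sub_cancel]
    have hN : (∑ i ∈ Finset.range (s+1), (s-i)) = ∑ i ∈ Finset.range (s+1), i := by
      simpa using Finset.sum_range_reflect (fun i => i) (s+1)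
    have hg := Finset.sum_range_id_mul_two (s+1)
    simp only [Nat.add_sub_cancel] at hg
    rw [hN]
    obtain ⟨c, hc⟩ := Nat.even_mul_succ_self s
    have e1 : (s+1+2) * s = s*s + 3*s := by ring
    have e2 : (s+1) * s = s*s + s := by ring
    have e3 : s*(s+1) = s*s+s := by ring
    have e4 : s^2 = s*s := sq s
    rw [e1, e4]
    rw [e2] at hg
    rw [e3] at hc
    generalize s*s = u at *
    omega
  obtain ⟨c, hc⟩ := hdvd
  have h1 : Complex.I ^ (M + K) = 1 := by
    rw [hc, pow_mul]
    norm_num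
  have h2 : (-Complex.I)^M * Complex.I^M = 1 := by
    rw [← mul_pow]
    norm_num
  calc (-Complex.I)^M = (-Complex.I)^M * (Complex.I^M * Complex.I^K) := by
        rw [← pow_add, h1, mul_one]
    _ = ((-Complex.I)^M * Complex.I^M) * Complex.I^K := by ring
    _ = Complex.I^K := by rw [h2, one_mul]

lemma exp_neg_pi_div_two : Complex.exp (((-(π/2) : ℝ)) * Complex.I) = -Complex.I := by
  rw [Complex.exp_mul_I, ← Complex.ofReal_cos, ← Complex.ofReal_sin]
  simp [Real.cos_pi_div_two, Real.sin_pi_div_two]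

lemma aux_pair {M : Type*} [CommMonoid M] (r : ℕ) (hr : 1 ≤ r) (f : ℕ → ℕ → M) :
    (∏ i : Fin r, ∏ j ∈ Finset.Ioi i, f (i : ℕ) (j : ℕ))
      = ∏ i ∈ Finset.range r, ∏ k ∈ Finset.range (r-1-i), f i (i+1+k) := by
  have h1 : ∀ i : Fin r, (∏ j ∈ Finset.Ioi i, f (i : ℕ) (j : ℕ))
      = ∏ j ∈ Finset.Ioc (i : ℕ) (r-1), f (i : ℕ) j := by
    intro i
    rw [show Finset.Ioc (i:ℕ) (r-1) = Finset.Ioo (i:ℕ) r by ext j; simp only [Finset.mem_Ioo, Finset.mem_Ioc]; omega,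
      ← Fin.map_valEmbedding_Ioi, Finset.prod_map]
    rfl
  rw [Finset.prod_congr rfl (fun i _ => h1 i)]
  rw [Fin.prod_univ_eq_prod_range (fun m => ∏ j ∈ Finset.Ioc m (r-1), f m j) r]
  refine Finset.prod_congr rfl (fun i hi => ?_)
  rw [Finset.mem_range] at hi
  have : Finset.Ioc i (r-1) = Finset.Ico (i+1) r := by
    have : r = (r-1)+1 := by omega
    rw [this]
    ext j; simp only [Finset.mem_Ioc, Finset.mem_Ico]; omega
  rw [this, Finset.prod_Ico_eq_prod_range]
  have hc : r - (i+1) = r - 1 - i := by omega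
  rw [hc]

lemma vfac (r : ℕ) (m n : ℕ) :
    Complex.exp ((-(2*π*n/r) : ℝ)*Complex.I) - Complex.exp ((-(2*π*m/r) : ℝ)*Complex.I)
      = Complex.exp ((-(π*(((m:ℝ))+n)/r) : ℝ)*Complex.I)
          * (2*Real.sin (π*((n:ℝ)-m)/r)) * (-Complex.I) := by
  rw [expfac (-(2*π*n/r)) (-(2*π*m/r)),
    show ((-(2*π*(n:ℝ)/r) + -(2*π*(m:ℝ)/r))/2 : ℝ) = (-(π*(((m:ℝ))+n)/r) : ℝ) by ring,
    show ((-(2*π*(m:ℝ)/r) - -(2*π*(n:ℝ)/r))/2 : ℝ) = (π*((n:ℝ)-m)/r : ℝ) by ring]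

/-- the determinant of the `r × r` matrix with `(i,j)`-entry
`exp(-2πi·i·j/r)` (indices `0 ≤ i,j ≤ r-1`) equals `r^(r/2) ⬝ i^((r+2)(r-1)/2)`. -/
theorem stmt10 (r : ℕ) (hr : 1 ≤ r) :
    Matrix.det (Matrix.of fun i j : Fin r =>
        Complex.exp (-2 * Real.pi * Complex.I * ((i : ℕ) : ℂ) * ((j : ℕ) : ℂ) / r))
      = (((r : ℝ) ^ ((r : ℝ) / 2) : ℝ) : ℂ) * Complex.I ^ (((r + 2) * (r - 1)) / 2) := by
  have hr0 : (r:ℂ) ≠ 0 := Nat.cast_ne_zero.mpr (by omega)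
  -- step 1: this is a Vandermonde matrix
  have hmat : (Matrix.of fun i j : Fin r =>
        Complex.exp (-2 * Real.pi * Complex.I * ((i : ℕ) : ℂ) * ((j : ℕ) : ℂ) / r))
      = Matrix.vandermonde (fun i : Fin r =>
          Complex.exp ((-(2*π*((i:ℕ):ℝ)/r) : ℝ)*Complex.I)) := by
    ext i j
    simp only [Matrix.of_apply, Matrix.vandermonde]
    rw [← Complex.exp_nat_mul]
    congr 1
    push_cast
    ring
  rw [hmat, Matrix.det_vandermonde]
  -- step 2: factor each term
  have hfac : ∀ i : Fin r, ∀ j ∈ Finset.Ioi i,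
      Complex.exp ((-(2*π*((j:ℕ):ℝ)/r) : ℝ)*Complex.I)
        - Complex.exp ((-(2*π*((i:ℕ):ℝ)/r) : ℝ)*Complex.I)
      = (fun m n : ℕ => Complex.exp ((-(π*(((m:ℝ))+n)/r) : ℝ)*Complex.I)
          * (2*Real.sin (π*((n:ℝ)-m)/r)) * (-Complex.I)) (i:ℕ) (j:ℕ) :=
    fun i j _ => vfac r (i:ℕ) (j:ℕ)
  rw [Finset.prod_congr rfl (fun i _ => Finset.prod_congr rfl (hfac i))]
  rw [aux_pair r hr (fun m n => Complex.exp ((-(π*(((m:ℝ))+n)/r) : ℝ)*Complex.I)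
      * (2*Real.sin (π*((n:ℝ)-m)/r)) * (-Complex.I))]
  have hfold : ∀ i ∈ Finset.range r, ∀ k ∈ Finset.range (r-1-i),
      Complex.exp ((-(π*(((i:ℝ))+((i+1+k:ℕ):ℝ))/r) : ℝ)*Complex.I)
        * (2*Real.sin (π*(((i+1+k:ℕ):ℝ)-(i:ℝ))/r)) * (-Complex.I)
      = Complex.exp ((-(π*(((i:ℝ))+((i+1+k:ℕ):ℝ))/r) : ℝ)*Complex.I)
        * (((2*Real.sin (π*((k:ℝ)+1)/r) : ℝ)) : ℂ) * (-Complex.I) := by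
    intro i _ k _
    rw [show ((((i+1+k:ℕ):ℝ)-(i:ℝ)) : ℝ) = (k:ℝ)+1 by push_cast; ring]
    push_cast
    ring
  rw [Finset.prod_congr rfl (fun i hi => Finset.prod_congr rfl (hfold i hi))]
  simp only [Finset.prod_mul_distrib, Finset.prod_const, Finset.card_range]
  rw [Finset.prod_pow_eq_pow_sum]
  -- phase part
  have hphase : (∏ i ∈ Finset.range r, ∏ k ∈ Finset.range (r-1-i),
      Complex.exp ((-(π*(((i:ℝ))+((i+1+k:ℕ):ℝ))/r) : ℝ)*Complex.I))
      = (-Complex.I)^((r-1)^2) := by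
    rw [Finset.prod_congr rfl (fun i _ => (Complex.exp_sum (Finset.range (r-1-i))
        (fun k => ((-(π*(((i:ℝ))+((i+1+k:ℕ):ℝ))/r) : ℝ) : ℂ)*Complex.I)).symm),
      ← Complex.exp_sum]
    have hterm : ∀ i ∈ Finset.range r, (∑ k ∈ Finset.range (r-1-i),
        ((-(π*(((i:ℝ))+((i+1+k:ℕ):ℝ))/r) : ℝ) : ℂ)*Complex.I)
        = ∑ k ∈ Finset.range (r-1-i),
          (((i:ℂ) + ((i+1+k : ℕ):ℂ)) * ((-((π:ℂ)/r)) * Complex.I)) := by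
      intro i _
      refine Finset.sum_congr rfl (fun k _ => ?_)
      push_cast
      ring
    rw [Finset.sum_congr rfl hterm]
    rw [Finset.sum_congr rfl (fun i (_ : i ∈ Finset.range r) =>
      (Finset.sum_mul (Finset.range (r-1-i)) (fun k => ((i:ℂ) + ((i+1+k : ℕ):ℂ)))
        ((-((π:ℂ)/r)) * Complex.I)).symm)]
    rw [← Finset.sum_mul, aux_gauss]
    have hexpo : (r:ℂ)*((r:ℂ)-1)^2/2 * ((-((π:ℂ)/r)) * Complex.I)
        = (((r-1)^2 : ℕ) : ℂ) * (((-(π/2) : ℝ) : ℂ) * Complex.I) := by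
      obtain ⟨s, rfl⟩ : ∃ s, r = s + 1 := ⟨r - 1, by omega⟩
      simp only [Nat.add_sub_cancel]
      have hs1 : ((s:ℂ)+1) ≠ 0 := by
        intro h
        apply hr0
        push_cast
        exact h
      push_cast
      rw [show ((s:ℂ)+1) * (((s:ℂ)+1) - 1)^2/2 * (-((π:ℂ)/((s:ℂ)+1)) * Complex.I)
          = (((s:ℂ)+1)⁻¹ * ((s:ℂ)+1)) * ((s:ℂ)^2 * (-((π:ℂ)/2) * Complex.I)) from by ring,
        inv_mul_cancel₀ hs1, one_mul]
    rw [hexpo, Complex.exp_nat_mul, exp_neg_pi_div_two]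
  -- sine part
  have hsinprod : (∏ i ∈ Finset.range r, ∏ k ∈ Finset.range (r-1-i),
      (((2 * Real.sin (π*((k:ℝ)+1)/r) : ℝ)) : ℂ))
      = (((r:ℝ) ^ ((r:ℝ)/2) : ℝ) : ℂ) := by
    rw [← partA r hr]
    push_cast
    rfl
  rw [hphase, hsinprod]
  have hcomb : (-Complex.I)^((r-1)^2) * ((((r:ℝ) ^ ((r:ℝ)/2) : ℝ) : ℂ))
      * (-Complex.I)^(∑ i ∈ Finset.range r, (r-1-i))
      = (((r:ℝ) ^ ((r:ℝ)/2) : ℝ) : ℂ)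
        * (-Complex.I)^((∑ i ∈ Finset.range r, (r-1-i)) + (r-1)^2) := by
    rw [pow_add]
    ring
  rw [hcomb, partI r hr]
end

section
/- For every integer r ≥ 1, the determinant of the r×r complex matrix with (i,j)-entry exp(−2πi·(i+1/2)·j/r), row and column indices ranging over 0 ≤ i,j ≤ r−1, equals r^{r/2} · i^{r(r−1)/2}, where i is the imaginary unit (and r^{r/2} denotes the positive real (r/2)-th power of r). -/
open Finset Complex Real

lemma offdiag_fix {r : ℕ} {M : Type*} [CommMonoid M] (f : Fin r → Fin r → M) :
    ∏ i : Fin r, ∏ j ∈ Finset.Ioi i, f j i * f i j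
      = ∏ i : Fin r, ∏ j ∈ ({i}ᶜ : Finset (Fin r)), f j i := by
  have h := Finset.prod_prod_Ioi_mul_eq_prod_prod_off_diag f
  rw [h]

lemma offdiag_fix_sum {r : ℕ} {M : Type*} [AddCommMonoid M] (f : Fin r → Fin r → M) :
    ∑ i : Fin r, ∑ j ∈ Finset.Ioi i, (f j i + f i j)
      = ∑ i : Fin r, ∑ j ∈ ({i}ᶜ : Finset (Fin r)), f j i := by
  have h := Finset.sum_sum_Ioi_add_eq_sum_sum_off_diag f
  rw [h]

open Polynomial in
lemma aux1 {r : ℕ} (hr : 1 ≤ r) {ζ : ℂ} (hζ : IsPrimitiveRoot ζ r) :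
    ∏ k ∈ Finset.Ico 1 r, (1 - ζ ^ k) = r := by
  have hrr : ((X:ℂ[X]) ^ r - C 1).roots = Polynomial.nthRoots r (1:ℂ) := rfl
  have hroots : (Polynomial.nthRoots r (1:ℂ)) = (Multiset.range r).map (ζ ^ ·) := by
    simpa using hζ.nthRoots_eq (one_pow r)
  have hmonic : ((X:ℂ[X]) ^ r - C 1).Monic := monic_X_pow_sub_C 1 (by omega)
  have hcard : Multiset.card ((X:ℂ[X]) ^ r - C 1).roots = ((X:ℂ[X]) ^ r - C 1).natDegree := by
    rw [hrr, hroots]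
    have := natDegree_X_pow_sub_C (n:=r) (r:=(1:ℂ))
    simp only [Multiset.card_map, Multiset.card_range, this]
  have h1 : (X:ℂ[X]) ^ r - C 1 = ∏ k ∈ Finset.range r, (X - C (ζ ^ k)) := by
    conv_lhs => rw [← prod_multiset_X_sub_C_of_monic_of_roots_card_eq hmonic hcard]
    rw [hrr, hroots, Multiset.map_map]
    rw [Finset.prod_eq_multiset_prod, Finset.range_val]
    rfl
  have h2 : ∏ k ∈ Finset.range r, ((X:ℂ[X]) - C (ζ ^ k)) =
      (X - 1) * ∏ k ∈ Finset.Ico 1 r, (X - C (ζ ^ k)) := by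
    rw [Finset.range_eq_Ico, Finset.prod_eq_prod_Ico_succ_bot (by omega)]
    simp
  have h3 : ((X:ℂ[X]) - 1) * ∏ k ∈ Finset.Ico 1 r, (X - C (ζ ^ k)) =
      (X - 1) * ∑ i ∈ Finset.range r, X ^ i := by
    rw [← h2, ← h1, C_1, ← geom_sum_mul, mul_comm]
  have h4 : ∏ k ∈ Finset.Ico 1 r, ((X:ℂ[X]) - C (ζ ^ k)) = ∑ i ∈ Finset.range r, X ^ i :=
    mul_left_cancel₀ (X_sub_C_ne_zero 1) (by simpa using h3)
  have := congrArg (Polynomial.eval 1) h4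
  simp only [eval_prod, eval_sub, eval_one, eval_X, eval_C, eval_finset_sum, eval_pow,
    one_pow, Finset.sum_const, Finset.card_range, nsmul_eq_mul, mul_one] at this
  exact this

open Fin.NatCast in
lemma aux2 {r : ℕ} {ζ : ℂ} (hζ : ∏ k ∈ Finset.Ico 1 r, (1 - ζ ^ k) = r) (i : Fin r) :
    ∏ j ∈ ({i}ᶜ : Finset (Fin r)), (1 - ζ ^ ((j - i : Fin r) : ℕ)) = r := by
  haveI : NeZero r := ⟨by rcases i with ⟨v,h⟩; omega⟩
  rw [← hζ]
  refine Finset.prod_nbij' (fun j => ((j - i : Fin r) : ℕ)) (fun k => i + (k : Fin r)) ?_ ?_ ?_ ?_ ?_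
  · intro a ha
    simp only [Finset.mem_compl, Finset.mem_singleton] at ha
    simp only [Finset.mem_Ico]
    refine ⟨?_, (a - i).isLt⟩
    by_contra h
    push_neg at h
    interval_cases h' : ((a - i : Fin r) : ℕ)
    · refine ha ?_
      have h0 : a - i = 0 := by exact Fin.ext (by simpa using h')
      rwa [sub_eq_zero] at h0
  · intro k hk
    simp only [Finset.mem_Ico] at hk
    simp only [Finset.mem_compl, Finset.mem_singleton]
    intro h
    have h0 : (k : Fin r) = 0 := by rwa [add_eq_left] at h
    have : ((k : Fin r) : ℕ) = 0 := by rw [h0]; rfl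
    rw [Fin.val_natCast, Nat.mod_eq_of_lt hk.2] at this
    omega
  · intro a _; simp [Fin.cast_val_eq_self]
  · intro k hk
    simp only [Finset.mem_Ico] at hk
    simp [Fin.val_natCast, Nat.mod_eq_of_lt hk.2]
  · intro a _; rfl

lemma fact1 {r : ℕ} (hr : 1 ≤ r) (a b : ℕ) (hab : a < b) (hbr : b < r) :
    Complex.exp (-2 * (π:ℂ) * I * ((b:ℂ) + 1/2) / r) - Complex.exp (-2 * (π:ℂ) * I * ((a:ℂ) + 1/2) / r)
      = Complex.exp (-(π:ℂ) * I * ((a:ℂ) + (b:ℂ) + 1) / r) * (-2 * I)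
        * ((Real.sin (π * (((b:ℕ):ℝ) - ((a:ℕ):ℝ)) / r) : ℝ) : ℂ) := by
  have hrC : (r:ℂ) ≠ 0 := by exact_mod_cast (by omega : r ≠ 0)
  rw [Complex.ofReal_sin]
  set t : ℂ := ((π * (((b:ℕ):ℝ) - ((a:ℕ):ℝ)) / r : ℝ) : ℂ) with ht
  have htt : t = (π:ℂ) * ((b:ℂ) - (a:ℂ)) / r := by rw [ht]; push_cast; ring
  have hsin : Complex.sin t = (Complex.exp (-t * I) - Complex.exp (t * I)) * I / 2 := rfl
  rw [hsin]
  rw [show Complex.exp (-(π:ℂ) * I * ((a:ℂ) + (b:ℂ) + 1) / r) * (-2 * I)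
        * ((Complex.exp (-t * I) - Complex.exp (t * I)) * I / 2)
      = Complex.exp (-(π:ℂ) * I * ((a:ℂ) + (b:ℂ) + 1) / r) * Complex.exp (-t * I)
        - Complex.exp (-(π:ℂ) * I * ((a:ℂ) + (b:ℂ) + 1) / r) * Complex.exp (t * I) by
      have : (I:ℂ) * I = -1 := Complex.I_mul_I
      ring_nf
      ring_nf at this ⊢
      rw [Complex.I_sq] <;> ring]
  rw [← Complex.exp_add, ← Complex.exp_add]
  congr 1
  · congr 1; rw [htt]; field_simp; ring
  · congr 1; rw [htt]; field_simp; ring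

lemma fact2 {r d : ℕ} (hd1 : 1 ≤ d) (hdr : d < r) :
    (1 - Complex.exp (2 * (π:ℂ) * I / r) ^ d) * (1 - Complex.exp (2 * (π:ℂ) * I / r) ^ (r - d))
      = ((4 * Real.sin (π * (d:ℝ) / r) ^ 2 : ℝ) : ℂ) := by
  have hr0 : (0:ℕ) < r := by omega
  have hrC : (r:ℂ) ≠ 0 := by exact_mod_cast hr0.ne'
  set θ : ℝ := 2 * π * (d:ℝ) / r with hθ
  have h1 : Complex.exp (2 * (π:ℂ) * I / r) ^ d = Complex.cos θ + Complex.sin θ * I := by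
    rw [← Complex.exp_nat_mul, ← Complex.exp_mul_I]
    congr 1
    push_cast [hθ]
    field_simp
  have h2 : Complex.exp (2 * (π:ℂ) * I / r) ^ (r - d) = Complex.cos θ - Complex.sin θ * I := by
    rw [← Complex.exp_nat_mul]
    have : ((r - d : ℕ) : ℂ) = (r:ℂ) - (d:ℂ) := by push_cast [Nat.cast_sub hdr.le]; ring
    rw [this]
    have harg : ((r:ℂ) - (d:ℂ)) * (2 * (π:ℂ) * I / r) = 2 * (π:ℂ) * I + (-θ:ℝ) * I := by
      push_cast [hθ]; field_simp; ring
    rw [harg, Complex.exp_add, Complex.exp_two_pi_mul_I, one_mul, Complex.exp_mul_I]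
    push_cast
    simp [Complex.cos_neg, Complex.sin_neg]
    ring
  rw [h1, h2]
  have hpyth : Complex.sin θ ^ 2 + Complex.cos θ ^ 2 = 1 := Complex.sin_sq_add_cos_sq θ
  have hexpand : (1 - (Complex.cos θ + Complex.sin θ * I)) * (1 - (Complex.cos θ - Complex.sin θ * I))
      = 2 - 2 * Complex.cos θ := by
    have hI : (I:ℂ)^2 = -1 := Complex.I_sq
    linear_combination (-(Complex.sin (θ:ℂ))^2) * hI + hpyth
  rw [hexpand]
  have : Real.sin (π * (d:ℝ) / r) ^ 2 = 1/2 - Real.cos (2 * (π * (d:ℝ) / r)) / 2 :=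
    Real.sin_sq_eq_half_sub _
  rw [this]
  have hθ2 : 2 * (π * (d:ℝ) / r) = θ := by rw [hθ]; ring
  rw [hθ2]
  push_cast [Complex.ofReal_cos]
  ring

lemma aux3 {r : ℕ} (hr : 1 ≤ r) :
    ∏ i : Fin r, ∏ j ∈ Finset.Ioi i,
        ((4 * Real.sin (π * (((j:ℕ):ℝ) - ((i:ℕ):ℝ)) / r) ^ 2 : ℝ) : ℂ) = (r:ℂ) ^ r := by
  have hζ := Complex.isPrimitiveRoot_exp r (by omega)
  set ζ := Complex.exp (2 * (π:ℂ) * I / r) with hzdef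
  have h1 : ∏ k ∈ Finset.Ico 1 r, (1 - ζ ^ k) = r := aux1 hr hζ
  have hoff := offdiag_fix (fun i j : Fin r => (1 - ζ ^ ((i - j : Fin r) : ℕ)))
  have hRHS : ∏ i : Fin r, ∏ j ∈ ({i}ᶜ : Finset (Fin r)), (1 - ζ ^ ((j - i : Fin r) : ℕ))
      = (r:ℂ) ^ r := by
    rw [Finset.prod_congr rfl fun i _ => aux2 h1 i]
    simp [Finset.card_univ]
  calc ∏ i : Fin r, ∏ j ∈ Finset.Ioi i,
        ((4 * Real.sin (π * (((j:ℕ):ℝ) - ((i:ℕ):ℝ)) / r) ^ 2 : ℝ) : ℂ)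
      = ∏ i : Fin r, ∏ j ∈ Finset.Ioi i,
        ((1 - ζ ^ ((j - i : Fin r) : ℕ)) * (1 - ζ ^ ((i - j : Fin r) : ℕ))) := by
        refine Finset.prod_congr rfl fun i _ => Finset.prod_congr rfl fun j hj => ?_
        have hij : i < j := Finset.mem_Ioi.mp hj
        have hval1 : ((j - i : Fin r) : ℕ) = (j:ℕ) - (i:ℕ) := by
          rw [Fin.sub_def]
          have h1' : r - (i:ℕ) + (j:ℕ) = r + ((j:ℕ) - (i:ℕ)) := by omega
          simp only [h1', Nat.add_mod_left,
            Nat.mod_eq_of_lt (show (j:ℕ) - (i:ℕ) < r by omega)]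
        have hval2 : ((i - j : Fin r) : ℕ) = r - ((j:ℕ) - (i:ℕ)) := by
          rw [Fin.sub_def]
          simp only [Nat.mod_eq_of_lt (show r - (j:ℕ) + (i:ℕ) < r by omega)]
          omega
        rw [hval1, hval2]
        have hcast : (((j:ℕ):ℝ) - ((i:ℕ):ℝ)) = (((j:ℕ) - (i:ℕ) : ℕ) : ℝ) := by
          push_cast [Nat.cast_sub hij.le]; ring
        rw [hcast]
        exact (fact2 (by omega) (by omega)).symm
    _ = ∏ i : Fin r, ∏ j ∈ ({i}ᶜ : Finset (Fin r)), (1 - ζ ^ ((j - i : Fin r) : ℕ)) := hoff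
    _ = (r:ℂ) ^ r := hRHS

/-- the determinant of the `r × r` matrix with `(i,j)`-entry
`exp(-2πi·(i+1/2)·j/r)` (indices `0 ≤ i,j ≤ r-1`) equals `r^(r/2) ⬝ i^(r(r-1)/2)`. -/
theorem stmt11 (r : ℕ) (hr : 1 ≤ r) :
    Matrix.det (Matrix.of fun i j : Fin r =>
        Complex.exp (-2 * Real.pi * Complex.I * (((i : ℕ) : ℂ) + 1 / 2) * ((j : ℕ) : ℂ) / r))
      = (((r : ℝ) ^ ((r : ℝ) / 2) : ℝ) : ℂ) * Complex.I ^ ((r * (r - 1)) / 2) := by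
  have hr0 : r ≠ 0 := by omega
  have hrC : (r:ℂ) ≠ 0 := Nat.cast_ne_zero.mpr hr0
  have hrR : (0:ℝ) < (r:ℝ) := by exact_mod_cast Nat.pos_of_ne_zero hr0
  set N := r * (r - 1) / 2 with hN
  have hsumfin : ∑ i : Fin r, (i:ℕ) = N := by
    rw [Fin.sum_univ_eq_sum_range (fun k => k) r, Finset.sum_range_id]
  have h2N : (N:ℂ) * 2 = (r:ℂ) * ((r:ℂ) - 1) := by
    have hdvd : 2 ∣ r * (r - 1) := by
      have h := Nat.even_mul_succ_self (r - 1)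
      rw [Nat.sub_add_cancel hr] at h
      rw [mul_comm]
      exact h.two_dvd
    have h' : (N:ℕ) * 2 = r * (r-1) := by rw [hN, Nat.div_mul_cancel hdvd]
    have := congrArg (Nat.cast (R := ℂ)) h'
    push_cast [Nat.cast_sub hr] at this
    linear_combination this
  have hK : ∑ j : Fin r, ((j:ℕ):ℂ) = (N:ℂ) := by
    rw [← Nat.cast_sum, hsumfin]
  set x : Fin r → ℂ := fun i => Complex.exp (-2 * (π:ℂ) * I * (((i:ℕ):ℂ) + 1/2) / r) with hx
  have hM : (Matrix.of fun i j : Fin r =>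
      Complex.exp (-2 * Real.pi * Complex.I * (((i : ℕ) : ℂ) + 1 / 2) * ((j : ℕ) : ℂ) / r))
      = Matrix.vandermonde x := by
    ext i j
    simp only [Matrix.of_apply, Matrix.vandermonde_apply, hx]
    rw [← Complex.exp_nat_mul]
    congr 1
    ring
  rw [hM, Matrix.det_vandermonde]
  set E : Fin r → Fin r → ℂ :=
    fun i j => Complex.exp (-(π:ℂ) * I * (((i:ℕ):ℂ) + ((j:ℕ):ℂ) + 1) / r) with hE
  set sR : Fin r → Fin r → ℝ :=
    fun i j => Real.sin (π * (((j:ℕ):ℝ) - ((i:ℕ):ℝ)) / r) with hsR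
  have hfac : ∀ i : Fin r, ∀ j ∈ Finset.Ioi i,
      x j - x i = E i j * (-2 * I) * ((sR i j : ℝ) : ℂ) := by
    intro i j hj
    have hij : i < j := Finset.mem_Ioi.mp hj
    exact fact1 hr (i:ℕ) (j:ℕ) hij j.isLt
  rw [Finset.prod_congr rfl fun i _ => Finset.prod_congr rfl fun j hj => hfac i j hj]
  have hsplit : ∏ i : Fin r, ∏ j ∈ Finset.Ioi i, (E i j * (-2 * I) * ((sR i j : ℝ) : ℂ))
      = (∏ i : Fin r, ∏ j ∈ Finset.Ioi i, E i j)
        * (∏ i : Fin r, ∏ j ∈ Finset.Ioi i, (-2 * I : ℂ))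
        * (∏ i : Fin r, ∏ j ∈ Finset.Ioi i, ((sR i j : ℝ) : ℂ)) := by
    simp only [← Finset.prod_mul_distrib]
  rw [hsplit]
  have hcard : ∑ i : Fin r, (Finset.Ioi i).card = N := by
    rw [Finset.sum_congr rfl fun (i : Fin r) _ => Fin.card_Ioi i]
    rw [Fin.sum_univ_eq_sum_range (fun k => r - 1 - k) r,
      Finset.sum_range_reflect (fun k => k) r, Finset.sum_range_id]
  have hB : ∏ i : Fin r, ∏ j ∈ Finset.Ioi i, (-2 * I : ℂ) = (-2 * I) ^ N := by
    simp only [Finset.prod_const]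
    rw [Finset.prod_pow_eq_pow_sum, hcard]
  have hA : ∏ i : Fin r, ∏ j ∈ Finset.Ioi i, E i j = (-1 : ℂ) ^ N := by
    simp only [hE, ← Complex.exp_sum]
    set W : ℂ := ∑ i : Fin r, ∑ j ∈ Finset.Ioi i,
      (-(π:ℂ) * I * (((i:ℕ):ℂ) + ((j:ℕ):ℂ) + 1) / r) with hW
    have hWval : W = (N:ℂ) * (-((π:ℂ) * I)) := by
      have hoff := offdiag_fix_sum
        (fun i j : Fin r => (-(π:ℂ) * I * (((i:ℕ):ℂ) + ((j:ℕ):ℂ) + 1) / r))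
      have hLHS : ∑ i : Fin r, ∑ j ∈ Finset.Ioi i,
          ((-(π:ℂ) * I * (((j:ℕ):ℂ) + ((i:ℕ):ℂ) + 1) / r)
            + (-(π:ℂ) * I * (((i:ℕ):ℂ) + ((j:ℕ):ℂ) + 1) / r))
          = 2 * W := by
        rw [hW, Finset.mul_sum]
        refine Finset.sum_congr rfl fun i _ => ?_
        rw [Finset.mul_sum]
        exact Finset.sum_congr rfl fun j _ => by ring
      have huniv : ∀ i : Fin r, ∑ j : Fin r, (-(π:ℂ) * I * (((j:ℕ):ℂ) + ((i:ℕ):ℂ) + 1) / r)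
          = -(π:ℂ) * I * ((N:ℂ) + (r:ℂ) * (((i:ℕ):ℂ) + 1)) / r := by
        intro i
        have hsum : ∑ j : Fin r, (((j:ℕ):ℂ) + ((i:ℕ):ℂ) + 1)
            = (N:ℂ) + (r:ℂ) * (((i:ℕ):ℂ) + 1) := by
          rw [Finset.sum_add_distrib, Finset.sum_add_distrib, hK]
          simp only [Finset.sum_const, Finset.card_univ, Fintype.card_fin, nsmul_eq_mul, mul_one]
          ring
        calc ∑ j : Fin r, (-(π:ℂ) * I * (((j:ℕ):ℂ) + ((i:ℕ):ℂ) + 1) / r)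
            = (-(π:ℂ) * I / r) * ∑ j : Fin r, (((j:ℕ):ℂ) + ((i:ℕ):ℂ) + 1) := by
              rw [Finset.mul_sum]; exact Finset.sum_congr rfl fun j _ => by ring
          _ = -(π:ℂ) * I * ((N:ℂ) + (r:ℂ) * (((i:ℕ):ℂ) + 1)) / r := by rw [hsum]; ring
      have hinner : ∀ i : Fin r, ∑ j ∈ ({i}ᶜ : Finset (Fin r)),
          (-(π:ℂ) * I * (((j:ℕ):ℂ) + ((i:ℕ):ℂ) + 1) / r)
          = -(π:ℂ) * I * ((N:ℂ) + (r:ℂ) * (((i:ℕ):ℂ) + 1)) / r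
            - (-(π:ℂ) * I * (((i:ℕ):ℂ) + ((i:ℕ):ℂ) + 1) / r) := by
        intro i
        have h0 := Finset.sum_compl_add_sum ({i} : Finset (Fin r))
          (fun j => (-(π:ℂ) * I * (((j:ℕ):ℂ) + ((i:ℕ):ℂ) + 1) / r))
        simp only [Finset.sum_singleton] at h0
        rw [← huniv i]
        linear_combination h0
      have hR2 : ∑ i : Fin r, (∑ j ∈ ({i}ᶜ : Finset (Fin r)),
          (-(π:ℂ) * I * (((j:ℕ):ℂ) + ((i:ℕ):ℂ) + 1) / r)) = 2 * ((N:ℂ) * (-((π:ℂ) * I))) := by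
        rw [Finset.sum_congr rfl fun i _ => hinner i, Finset.sum_sub_distrib]
        have e1 : ∑ i : Fin r, (-(π:ℂ) * I * ((N:ℂ) + (r:ℂ) * (((i:ℕ):ℂ) + 1)) / r)
            = (-(π:ℂ) * I / r) * ((r:ℂ) * (N:ℂ) + (r:ℂ) * ((N:ℂ) + (r:ℂ))) := by
          rw [Finset.sum_congr rfl fun (i : Fin r) _ =>
            (show (-(π:ℂ) * I * ((N:ℂ) + (r:ℂ) * (((i:ℕ):ℂ) + 1)) / r)
              = (-(π:ℂ) * I / r) * ((N:ℂ) + (r:ℂ) * ((i:ℕ):ℂ) + (r:ℂ)) from by ring)]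
          rw [← Finset.mul_sum]
          congr 1
          rw [Finset.sum_add_distrib, Finset.sum_add_distrib, ← Finset.mul_sum, hK]
          simp only [Finset.sum_const, Finset.card_univ, Fintype.card_fin, nsmul_eq_mul, mul_one]
          ring
        have e2 : ∑ i : Fin r, (-(π:ℂ) * I * (((i:ℕ):ℂ) + ((i:ℕ):ℂ) + 1) / r)
            = (-(π:ℂ) * I / r) * (2 * (N:ℂ) + (r:ℂ)) := by
          rw [Finset.sum_congr rfl fun (i : Fin r) _ =>
            (show (-(π:ℂ) * I * (((i:ℕ):ℂ) + ((i:ℕ):ℂ) + 1) / r)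
              = (-(π:ℂ) * I / r) * (2 * ((i:ℕ):ℂ) + 1) from by ring)]
          rw [← Finset.mul_sum]
          congr 1
          rw [Finset.sum_add_distrib, ← Finset.mul_sum, hK]
          simp only [Finset.sum_const, Finset.card_univ, Fintype.card_fin, nsmul_eq_mul, mul_one]
        rw [e1, e2]
        have hrinv : ((r:ℂ))⁻¹ * (r:ℂ) = 1 := inv_mul_cancel₀ hrC
        linear_combination ((π:ℂ) * I * ((r:ℂ))⁻¹) * h2N
          + (-2 * (π:ℂ) * I * ((N:ℕ):ℂ)) * hrinv
      rw [hLHS, hR2] at hoff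
      linear_combination hoff / 2
    rw [hWval, Complex.exp_nat_mul]
    congr 1
    rw [Complex.exp_neg, Complex.exp_pi_mul_I]
    norm_num
  rw [hA, hB]
  set S : ℝ := ∏ i : Fin r, ∏ j ∈ Finset.Ioi i, sR i j with hS
  have hSpos : 0 < S := by
    rw [hS]
    refine Finset.prod_pos fun i _ => Finset.prod_pos fun j hj => ?_
    have hij : (i:ℕ) < (j:ℕ) := Fin.lt_def.mp (Finset.mem_Ioi.mp hj)
    have hd1 : (0:ℝ) < ((j:ℕ):ℝ) - ((i:ℕ):ℝ) := by
      rw [sub_pos]; exact_mod_cast hij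
    have hd2 : ((j:ℕ):ℝ) - ((i:ℕ):ℝ) < (r:ℝ) := by
      have : (j:ℕ) < r := j.isLt
      have h2 : ((j:ℕ):ℝ) < (r:ℝ) := by exact_mod_cast this
      have h3 : (0:ℝ) ≤ ((i:ℕ):ℝ) := Nat.cast_nonneg _
      linarith
    simp only [hsR]
    refine Real.sin_pos_of_pos_of_lt_pi ?_ ?_
    · positivity
    · rw [div_lt_iff₀ hrR]
      have hπ : (0:ℝ) < π := Real.pi_pos
      calc π * (((j:ℕ):ℝ) - ((i:ℕ):ℝ)) < π * (r:ℝ) := by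
            exact (mul_lt_mul_iff_right₀ hπ).mpr hd2
        _ = π * (r:ℝ) := rfl
  have hC : ∏ i : Fin r, ∏ j ∈ Finset.Ioi i, ((sR i j : ℝ) : ℂ) = ((S : ℝ) : ℂ) := by
    rw [hS, Complex.ofReal_prod]
    exact Finset.prod_congr rfl fun i _ => (Complex.ofReal_prod _ _).symm
  rw [hC]
  -- value of S
  have hprod4 : ∏ i : Fin r, ∏ j ∈ Finset.Ioi i, (4 * sR i j ^ 2 : ℝ) = (r:ℝ) ^ r := by
    have h3 := aux3 (r := r) hr
    have h4 : ((∏ i : Fin r, ∏ j ∈ Finset.Ioi i, (4 * sR i j ^ 2 : ℝ) : ℝ) : ℂ)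
        = (((r:ℝ) ^ r : ℝ) : ℂ) := by
      rw [Complex.ofReal_prod]
      rw [Finset.prod_congr rfl fun (i : Fin r) _ => Complex.ofReal_prod _ _]
      simp only [hsR]
      rw [h3]
      push_cast
      ring
    exact_mod_cast h4
  have h4S : (4:ℝ) ^ N * S ^ 2 = (r:ℝ) ^ r := by
    rw [← hprod4, hS]
    rw [show (∏ i : Fin r, ∏ j ∈ Finset.Ioi i, sR i j) ^ 2
        = ∏ i : Fin r, (∏ j ∈ Finset.Ioi i, sR i j) ^ 2 from (Finset.prod_pow _ _ _).symm]
    rw [show (4:ℝ) ^ N = ∏ i : Fin r, (4:ℝ) ^ (Finset.Ioi i).card from by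
      rw [Finset.prod_pow_eq_pow_sum, hcard]]
    rw [← Finset.prod_mul_distrib]
    refine Finset.prod_congr rfl fun i _ => ?_
    rw [← Finset.prod_const, ← Finset.prod_pow, ← Finset.prod_mul_distrib]
  have hrpow2 : ((r:ℝ) ^ ((r:ℝ) / 2)) ^ 2 = (r:ℝ) ^ r := by
    rw [← Real.rpow_natCast ((r:ℝ) ^ ((r:ℝ) / 2)) 2, ← Real.rpow_mul hrR.le]
    have he : ((r:ℝ)/2) * ((2:ℕ):ℝ) = ((r:ℕ):ℝ) := by push_cast; ring
    rw [he, Real.rpow_natCast]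
  have hSval : S = (r:ℝ) ^ ((r:ℝ) / 2) / 2 ^ N := by
    have h2pow : (0:ℝ) < 2 ^ N := by positivity
    have hbpos : (0:ℝ) < (r:ℝ) ^ ((r:ℝ) / 2) := Real.rpow_pos_of_pos hrR _
    have hsq : ((2:ℝ) ^ N * S) ^ 2 = ((r:ℝ) ^ ((r:ℝ) / 2)) ^ 2 := by
      rw [hrpow2, ← h4S, mul_pow, ← pow_mul, mul_comm N 2, pow_mul]
      norm_num
    have h1 : (2:ℝ) ^ N * S = (r:ℝ) ^ ((r:ℝ) / 2) := by
      nlinarith [mul_pos h2pow hSpos, hbpos, hsq]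
    field_simp at h1 ⊢
    linarith
  rw [hSval, Complex.ofReal_div, Complex.ofReal_pow, Complex.ofReal_ofNat]
  rw [show ((-1:ℂ)) ^ N * (-2 * I) ^ N = 2 ^ N * I ^ N by
    rw [← mul_pow, show ((-1:ℂ)) * (-2 * I) = 2 * I by ring, mul_pow]]
  have h2C : ((2:ℂ)) ^ N ≠ 0 := pow_ne_zero _ two_ne_zero
  field_simp
end

section
/- Let r ≥ 1 and ν ≥ 1 be integers, N ≥ 0 a natural number, e ∈ ℤ, x ∈ ℂ, and 0 ≤ i ≤ r−1. Then Σ_{n=0}^{r−1} exp(−2πi(i+1/2)n/r) · (1/(rν)) · Σ_{l=0}^{rν−1} exp(πi(N−e+nν)/(rν)) · exp(−2πi(e−nν)l/(rν)) · ( x·exp(−2πi(l+1)/(rν)) + exp(2πil/(rν)) )^N = (1/ν) · Σ_{a=0}^{ν−1} exp( πi(N − e(2(i+ar)+1))/(rν) ) · ( x·exp(−2πi(i+ar+1)/(rν)) + exp(2πi(i+ar)/(rν)) )^N. -/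
open Finset Complex Real

/-!
Pull the sum over `n` inside: the half-integer shift `(i + 1/2)` in the outer phase cancels the
`n ν / (r ν)` part of the inner one, so the `n`-dependence collapses to the geometric sum of
`ω ^ (l - i)` with `ω = exp (2 π i / r)` a primitive `r`-th root of unity. That sum is `r` when
`l ≡ i (mod r)` and `0` otherwise, which leaves exactly the terms `l = i + a r`, `a < ν`.
-/

theorem IsPrimitiveRoot.geom_sum_zpow_eq_ite {K : Type*} [Field K] {ζ : K} {k : ℕ}
    (hζ : IsPrimitiveRoot ζ k) (m : ℤ) :
    ∑ n ∈ range k, (ζ ^ m) ^ n = if (k : ℤ) ∣ m then (k : K) else 0 := by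
  split_ifs with h
  · simp [(hζ.zpow_eq_one_iff_dvd m).2 h]
  · rw [geom_sum_eq (mt (hζ.zpow_eq_one_iff_dvd m).1 h), ← zpow_natCast, ← zpow_mul, mul_comm,
      zpow_mul, hζ.zpow_eq_one, one_zpow, sub_self, zero_div]

theorem Finset.sum_range_mul_ite_mod_eq {M : Type*} [AddCommMonoid M] (f : ℕ → M) {r i : ℕ}
    (hi : i < r) (ν : ℕ) :
    ∑ l ∈ range (r * ν), (if l % r = i then f l else 0) = ∑ a ∈ range ν, f (i + a * r) := by
  induction ν with
  | zero => simp
  | succ ν ih =>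
    rw [Nat.mul_succ, sum_range_add, ih, sum_range_succ]
    congr 1
    have hmod : ∀ j ∈ range r, (r * ν + j) % r = j := fun j hj => by
      rw [mul_comm]; exact Nat.mul_add_mod_of_lt (mem_range.1 hj)
    rw [sum_congr rfl (g := fun j => if j = i then f (r * ν + j) else 0) fun j hj => by
        rw [hmod j hj], sum_ite_eq' (range r) i, if_pos (mem_range.2 hi), add_comm, mul_comm]

theorem exp_mul_exp_mul_exp_eq_zpow_pow_mul_exp {r ν : ℕ} (hr : (r : ℂ) ≠ 0) (hν : (ν : ℂ) ≠ 0)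
    (N : ℕ) (e : ℤ) (i n l : ℕ) :
    Complex.exp (-2 * Real.pi * Complex.I * ((i : ℂ) + 1 / 2) * (n : ℂ) / r) *
        (Complex.exp (Real.pi * Complex.I * ((N : ℂ) - (e : ℂ) + (n : ℂ) * ν) / ((r : ℂ) * ν)) *
          Complex.exp (-2 * Real.pi * Complex.I * ((e : ℂ) - (n : ℂ) * ν) * (l : ℂ) /
            ((r : ℂ) * ν)))
      = (Complex.exp (2 * Real.pi * Complex.I / r) ^ ((l : ℤ) - i)) ^ n *
          Complex.exp (Real.pi * Complex.I * ((N : ℂ) - (e : ℂ) * (2 * (l : ℂ) + 1)) /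
            ((r : ℂ) * ν)) := by
  rw [← Complex.exp_int_mul, ← Complex.exp_nat_mul, ← Complex.exp_add, ← Complex.exp_add,
    ← Complex.exp_add]
  congr 1
  push_cast
  field_simp
  ring

/-- the summation identity for the `(i,j)`-entry of the matrix product
appearing in the proof of Corollary (eq:eqdiststart-even). -/
theorem stmt12 (r ν : ℕ) (hr : 1 ≤ r) (hν : 1 ≤ ν) (N : ℕ) (e : ℤ) (x : ℂ)
    (i : ℕ) (hi : i < r) :
    (∑ n ∈ Finset.range r,
        Complex.exp (-2 * Real.pi * Complex.I * ((i : ℂ) + 1 / 2) * (n : ℂ) / r) *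
          ((1 : ℂ) / ((r : ℂ) * ν) *
            ∑ l ∈ Finset.range (r * ν),
              Complex.exp (Real.pi * Complex.I * ((N : ℂ) - (e : ℂ) + (n : ℂ) * ν) /
                  ((r : ℂ) * ν)) *
                Complex.exp (-2 * Real.pi * Complex.I * ((e : ℂ) - (n : ℂ) * ν) * (l : ℂ) /
                  ((r : ℂ) * ν)) *
                (x * Complex.exp (-2 * Real.pi * Complex.I * ((l : ℂ) + 1) / ((r : ℂ) * ν)) +
                  Complex.exp (2 * Real.pi * Complex.I * (l : ℂ) / ((r : ℂ) * ν))) ^ N))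
      = (1 : ℂ) / (ν : ℂ) *
          ∑ a ∈ Finset.range ν,
            Complex.exp (Real.pi * Complex.I *
                ((N : ℂ) - (e : ℂ) * (2 * ((i : ℂ) + (a : ℂ) * r) + 1)) / ((r : ℂ) * ν)) *
              (x * Complex.exp (-2 * Real.pi * Complex.I * ((i : ℂ) + (a : ℂ) * r + 1) /
                  ((r : ℂ) * ν)) +
                Complex.exp (2 * Real.pi * Complex.I * ((i : ℂ) + (a : ℂ) * r) /
                  ((r : ℂ) * ν))) ^ N := by
  have hr0 : (r : ℂ) ≠ 0 := Nat.cast_ne_zero.2 (by omega)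
  have hν0 : (ν : ℂ) ≠ 0 := Nat.cast_ne_zero.2 (by omega)
  have hω : IsPrimitiveRoot (Complex.exp (2 * Real.pi * Complex.I / r)) r :=
    Complex.isPrimitiveRoot_exp r (by omega)
  have hdvd (l : ℕ) : (r : ℤ) ∣ (l : ℤ) - i ↔ l % r = i := by
    rw [← Nat.modEq_iff_dvd, Nat.ModEq, Nat.mod_eq_of_lt hi, eq_comm]
  set D : ℕ → ℂ := fun l =>
    Complex.exp (Real.pi * Complex.I * ((N : ℂ) - (e : ℂ) * (2 * (l : ℂ) + 1)) / ((r : ℂ) * ν)) *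
      (x * Complex.exp (-2 * Real.pi * Complex.I * ((l : ℂ) + 1) / ((r : ℂ) * ν)) +
        Complex.exp (2 * Real.pi * Complex.I * (l : ℂ) / ((r : ℂ) * ν))) ^ N with hD
  calc _ = 1 / ((r : ℂ) * ν) * ∑ l ∈ range (r * ν),
        (∑ n ∈ range r, (Complex.exp (2 * Real.pi * Complex.I / r) ^ ((l : ℤ) - i)) ^ n) * D l := by
        simp only [mul_sum, sum_mul]
        rw [sum_comm]
        refine sum_congr rfl fun l _ => sum_congr rfl fun n _ => ?_
        simp only [hD]
        rw [← mul_assoc (_ ^ n), ← exp_mul_exp_mul_exp_eq_zpow_pow_mul_exp hr0 hν0]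
        ring
    _ = 1 / ((r : ℂ) * ν) * ∑ l ∈ range (r * ν), if l % r = i then (r : ℂ) * D l else 0 := by
        simp_rw [hω.geom_sum_zpow_eq_ite, hdvd, ite_mul, zero_mul]
    _ = _ := by
        rw [sum_range_mul_ite_mod_eq _ hi, mul_sum, mul_sum]
        refine sum_congr rfl fun a _ => ?_
        rw [hD]
        push_cast
        field_simp
end

section
/- Let r ≥ 2 be an even integer, ν ≥ 1 an integer, M = rν, N ≥ 0, x ∈ ℂ, and let e_0 < e_1 < … < e_{r−1} be integers with 0 ≤ e_0 and e_{r−1} < M such that N − e_j + iν ≡ 0 (mod 2) for all 0 ≤ i,j ≤ r−1. With equidistant starting points a_i = iν for 0 ≤ i ≤ r−1, one has det( q(rν, N, iν, e_j; x, −1) )_{i,j=0}^{r−1} = i^{−r(r−1)/2} · (ν√r)^{−r} · det( Σ_{a=0}^{ν−1} exp( πi(N − e_j(2(i+ar)+1))/(rν) ) · ( x·exp(−2πi(i+ar+1)/(rν)) + exp(2πi(i+ar)/(rν)) )^N )_{i,j=0}^{r−1}. -/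
/-!
With `w_k = exp(πi(2k+1)/M)` running over the `M`-th roots of `-1`, orthogonality of characters
gives `q(M,N,a,e;x,-1) = M⁻¹ ∑_k w_k^(a-e) (x w_k⁻¹ + w_k)^N`. For `M = rν`, `a = iν` and
`k = i' + a r` the factor `w_k^(iν)` only depends on `i'`, so the matrix factors as `Vᵀ (M⁻¹ B)`,
where `V` is the Vandermonde matrix of the `r`-th roots of `-1` and `B` is the matrix on the
right-hand side. Each difference of two points of the unit circle is `i · 2 sin(half the angle)`
times a phase, so `det V = (-i)^(r(r-1)/2) T` with `T > 0`, and `Vᴴ V = r · 1` forces `T = √r ^ r`.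
-/

open Finset Complex Real

open scoped Matrix

namespace IsPrimitiveRoot

variable {K : Type*} [Field K]

theorem geom_sum_zpow_eq_ite_s13 {ρ : K} {n : ℕ} (hρ : IsPrimitiveRoot ρ n) (t : ℤ) :
    ∑ i ∈ range n, (ρ ^ t) ^ i = if (n : ℤ) ∣ t then (n : K) else 0 := by
  split_ifs with h
  · simp [(hρ.zpow_eq_one_iff_dvd t).2 h]
  · have h1 : ρ ^ t ≠ 1 := mt (hρ.zpow_eq_one_iff_dvd t).1 h
    rw [geom_sum_eq h1, ← zpow_natCast, ← zpow_mul, mul_comm, zpow_mul, zpow_natCast,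
      hρ.pow_eq_one, one_zpow, sub_self, zero_div]

theorem sum_odd_pow_zpow_eq_ite {ζ : K} {M : ℕ} (hζ : IsPrimitiveRoot ζ (2 * M)) (hM : 0 < M)
    (t : ℤ) :
    ∑ k ∈ range M, (ζ ^ (2 * k + 1)) ^ t = if (M : ℤ) ∣ t then (M : K) * (-1) ^ (t / M) else 0 := by
  have hζ0 : ζ ≠ 0 := hζ.ne_zero (by omega)
  have hsplit (k : ℕ) : (ζ ^ (2 * k + 1)) ^ t = ζ ^ t * ((ζ ^ 2) ^ t) ^ k := by
    rw [← zpow_natCast, ← zpow_natCast, ← zpow_natCast, ← zpow_mul, ← zpow_mul, ← zpow_mul,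
      ← zpow_add₀ hζ0]
    congr 1
    push_cast
    ring
  rw [sum_congr rfl fun k _ => hsplit k, ← mul_sum, (hζ.pow (by omega) rfl).geom_sum_zpow_eq_ite_s13]
  split_ifs with h
  · obtain ⟨s, rfl⟩ := h
    have hneg : ζ ^ M = -1 := (hζ.pow (by omega) (mul_comm 2 M)).eq_neg_one_of_two_right
    rw [Int.mul_ediv_cancel_left _ (by exact_mod_cast hM.ne'), zpow_mul, zpow_natCast, hneg]
    ring
  · rw [mul_zero]

end IsPrimitiveRoot

theorem zpow_mul_inv_add_pow {K : Type*} [Field K] {w : K} (hw : w ≠ 0) (x : K) (m : ℤ) (N : ℕ) :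
    w ^ m * (x * w⁻¹ + w) ^ N
      = ∑ d ∈ range (N + 1), (N.choose d : K) * x ^ d * w ^ (m + N - 2 * d) := by
  rw [add_pow, mul_sum]
  refine sum_congr rfl fun d hd => ?_
  have hdN : d ≤ N := Nat.lt_succ_iff.mp (mem_range.mp hd)
  have hexp : w ^ (m + N - 2 * d : ℤ) = w ^ m * (w ^ d)⁻¹ * w ^ (N - d) := by
    rw [show m + N - 2 * d = m - d + ((N - d : ℕ) : ℤ) by push_cast [Nat.cast_sub hdN]; ring,
      zpow_add₀ hw, zpow_sub₀ hw, zpow_natCast, zpow_natCast, div_eq_mul_inv]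
  rw [hexp, mul_pow, inv_pow]
  ring

theorem qxy_neg_one_eq_sum {M : ℕ} {ζ : ℂ} (hζ : IsPrimitiveRoot ζ (2 * M)) (hM : 0 < M)
    (N : ℕ) (a e : ℤ) (x : ℂ) :
    qxy M N a e x (-1) = (M : ℂ)⁻¹ * ∑ k ∈ range M,
      (ζ ^ (2 * k + 1)) ^ (a - e) * (x * (ζ ^ (2 * k + 1))⁻¹ + ζ ^ (2 * k + 1)) ^ N := by
  have hw (k : ℕ) : ζ ^ (2 * k + 1) ≠ 0 := pow_ne_zero _ (hζ.ne_zero (by omega))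
  simp_rw [zpow_mul_inv_add_pow (hw _)]
  rw [sum_comm, mul_sum, qxy]
  refine sum_congr rfl fun d _ => ?_
  rw [← mul_sum, hζ.sum_odd_pow_zpow_eq_ite hM, show a - e + N - 2 * d = a + N - 2 * d - e by ring]
  have hM' : (M : ℂ) ≠ 0 := by exact_mod_cast hM.ne'
  split_ifs
  · field_simp
  · simp

theorem Finset.sum_range_mul_eq_sum_sum {β : Type*} [AddCommMonoid β] (f : ℕ → β) (r ν : ℕ) :
    ∑ k ∈ range (r * ν), f k = ∑ a ∈ range ν, ∑ i ∈ range r, f (i + a * r) := by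
  induction ν with
  | zero => simp
  | succ ν ih =>
    rw [Nat.mul_succ, sum_range_add, ih, sum_range_succ]
    simp only [add_comm, mul_comm]

theorem qxy_matrix_eq_vandermonde_mul {r ν : ℕ} {ζ : ℂ} (hζ : IsPrimitiveRoot ζ (2 * (r * ν)))
    (hr : 0 < r) (hν : 0 < ν) (N : ℕ) (x : ℂ) (e : Fin r → ℤ) :
    Matrix.of (fun i j : Fin r => qxy (r * ν) N ((i : ℕ) * ν) (e j) x (-1)) =
      (Matrix.vandermonde fun i : Fin r => (ζ ^ ν) ^ (2 * (i : ℕ) + 1))ᵀ *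
        (((r * ν : ℕ) : ℂ)⁻¹ • Matrix.of fun i j : Fin r => ∑ a ∈ range ν,
          (ζ ^ (2 * ((i : ℕ) + a * r) + 1)) ^ (-e j) *
            (x * (ζ ^ (2 * ((i : ℕ) + a * r) + 1))⁻¹ + ζ ^ (2 * ((i : ℕ) + a * r) + 1)) ^ N) := by
  have hζ0 : ζ ≠ 0 := hζ.ne_zero (by positivity)
  have hperiod (i i' a : ℕ) :
      (ζ ^ (2 * (i' + a * r) + 1)) ^ (i * ν) = ((ζ ^ ν) ^ (2 * i' + 1)) ^ i := by
    rw [← pow_mul, ← pow_mul, ← pow_mul, show (2 * (i' + a * r) + 1) * (i * ν)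
        = ν * ((2 * i' + 1) * i) + 2 * (r * ν) * (a * i) by ring,
      pow_add, pow_mul _ (2 * (r * ν)), hζ.pow_eq_one, one_pow, mul_one]
  ext i j
  rw [Matrix.of_apply, qxy_neg_one_eq_sum hζ (by positivity), sum_range_mul_eq_sum_sum, sum_comm,
    Matrix.mul_apply, Finset.sum_range, mul_sum]
  refine sum_congr rfl fun i' _ => ?_
  rw [Matrix.transpose_apply, Matrix.vandermonde_apply, Matrix.smul_apply, Matrix.of_apply,
    smul_eq_mul, mul_sum, mul_sum, mul_sum]
  refine sum_congr rfl fun a _ => ?_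
  rw [show ((i : ℕ) : ℤ) * ν - e j = (((i : ℕ) * ν : ℕ) : ℤ) + -e j by push_cast; ring,
    zpow_add₀ (pow_ne_zero _ hζ0), zpow_natCast, hperiod]
  ring

theorem Fin.sum_card_Ioi (r : ℕ) : ∑ i : Fin r, #(Ioi i) = r * (r - 1) / 2 := by
  simp only [Fin.card_Ioi]
  rw [Fin.sum_univ_eq_sum_range (fun k => r - 1 - k) r, sum_range_reflect (fun k => k) r,
    sum_range_id]

theorem Fin.prod_prod_Ioi_mul {M : Type*} [CommMonoid M] {r : ℕ} (f : Fin r → M) :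
    ∏ i, ∏ j ∈ Ioi i, f i * f j = (∏ i, f i) ^ (r - 1) := by
  have hswap : ∏ i : Fin r, ∏ j ∈ Ioi i, f j = ∏ j : Fin r, f j ^ (j : ℕ) := by
    rw [prod_comm' (t' := univ) (s' := fun j => Iio j) (by simp [and_comm])]
    simp [Fin.card_Iio]
  simp only [prod_mul_distrib, hswap, Finset.prod_const, Fin.card_Ioi]
  rw [← prod_pow, ← prod_mul_distrib]
  exact prod_congr rfl fun i _ => by rw [← pow_add]; congr 1; omega

theorem Complex.exp_mul_I_sub_exp_mul_I (α β : ℂ) :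
    exp (α * I) - exp (β * I)
      = I * (2 * sin ((α - β) / 2)) * (exp (β / 2 * I) * exp (α / 2 * I)) := by
  have hα : exp (α * I) = exp ((α - β) / 2 * I) * (exp (β / 2 * I) * exp (α / 2 * I)) := by
    rw [← exp_add, ← exp_add]; ring_nf
  have hβ : exp (β * I) = exp (-((α - β) / 2) * I) * (exp (β / 2 * I) * exp (α / 2 * I)) := by
    rw [← exp_add, ← exp_add]; ring_nf
  rw [hα, hβ, Complex.sin]
  linear_combination -(exp (-((α - β) / 2) * I) - exp ((α - β) / 2 * I)) *
    (exp (β / 2 * I) * exp (α / 2 * I)) * I_sq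

theorem det_vandermonde_exp_mul_I {r : ℕ} (θ : Fin r → ℝ) :
    (Matrix.vandermonde fun j => exp (θ j * I)).det =
      I ^ (r * (r - 1) / 2) * exp ((∑ j, θ j) / 2 * I) ^ (r - 1) *
        ((∏ i, ∏ j ∈ Ioi i, 2 * Real.sin ((θ j - θ i) / 2) : ℝ) : ℂ) := by
  have hfac (i j : Fin r) : exp (θ j * I) - exp (θ i * I)
      = I * ((2 * Real.sin ((θ j - θ i) / 2) : ℝ) : ℂ) *
          (exp (θ i / 2 * I) * exp (θ j / 2 * I)) := by
    rw [exp_mul_I_sub_exp_mul_I]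
    push_cast
    rfl
  rw [Matrix.det_vandermonde]
  simp only [hfac]
  rw [prod_congr rfl fun i _ => prod_mul_distrib, prod_mul_distrib, Fin.prod_prod_Ioi_mul]
  simp only [prod_mul_distrib, Finset.prod_const, prod_pow_eq_pow_sum, Fin.sum_card_Ioi,
    ← Complex.exp_sum, ← ofReal_prod, ← sum_mul, ← sum_div, ofReal_sum]
  ring

theorem vandermonde_odd_pow_conjTranspose_mul_self {r : ℕ} {η : ℂ}
    (hη : IsPrimitiveRoot η (2 * r)) (hr : 0 < r) :
    (Matrix.vandermonde fun j : Fin r => η ^ (2 * (j : ℕ) + 1))ᴴ *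
        Matrix.vandermonde (fun j : Fin r => η ^ (2 * (j : ℕ) + 1)) = (r : ℂ) • 1 := by
  have hη0 : η ≠ 0 := hη.ne_zero (by omega)
  have hstar : star η = η⁻¹ := (inv_eq_conj (hη.norm'_eq_one (by omega))).symm
  ext j k
  have hterm (x : ℕ) : star ((η ^ (2 * x + 1)) ^ (j : ℕ)) * (η ^ (2 * x + 1)) ^ (k : ℕ)
      = (η ^ (2 * x + 1)) ^ ((k : ℕ) - (j : ℕ) : ℤ) := by
    rw [star_pow, star_pow, hstar, zpow_sub₀ (pow_ne_zero _ hη0), zpow_natCast, zpow_natCast,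
      div_eq_inv_mul]
    simp only [inv_pow]
  simp only [Matrix.mul_apply, Matrix.conjTranspose_apply, Matrix.vandermonde_apply,
    Matrix.smul_apply, Matrix.one_apply, smul_eq_mul]
  rw [Fin.sum_univ_eq_sum_range (fun x => star ((η ^ (2 * x + 1)) ^ (j : ℕ)) *
    (η ^ (2 * x + 1)) ^ (k : ℕ)) r, sum_congr rfl fun x _ => hterm x,
    hη.sum_odd_pow_zpow_eq_ite hr]
  by_cases hjk : j = k
  · simp [hjk]
  · have hndvd : ¬ (r : ℤ) ∣ (k : ℕ) - (j : ℕ) := fun hdvd =>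
      hjk (Fin.ext (by have := Int.eq_zero_of_dvd_of_natAbs_lt_natAbs hdvd (by omega); omega))
    simp [hjk, hndvd]

theorem Complex.isPrimitiveRoot_exp_pi_mul_I_div (n : ℕ) (hn : n ≠ 0) :
    IsPrimitiveRoot (exp (π * I / n)) (2 * n) := by
  convert Complex.isPrimitiveRoot_exp (2 * n) (by omega) using 2
  push_cast
  field_simp

theorem prod_prod_two_mul_sin_pos (r : ℕ) :
    0 < ∏ i : Fin r, ∏ j ∈ Ioi i, 2 * Real.sin (π * ((j : ℕ) - (i : ℕ)) / r) :=
  prod_pos fun i _ => prod_pos fun j hj => by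
    have hi : (0 : ℝ) ≤ (i : ℕ) := Nat.cast_nonneg _
    have hij : ((i : ℕ) : ℝ) < (j : ℕ) := by exact_mod_cast mem_Ioi.1 hj
    have hjr : ((j : ℕ) : ℝ) < r := by exact_mod_cast j.isLt
    have hr : (0 : ℝ) < r := by linarith
    refine mul_pos two_pos (sin_pos_of_pos_of_lt_pi (div_pos (mul_pos pi_pos (by linarith)) hr) ?_)
    rw [div_lt_iff₀ hr]
    exact mul_lt_mul_of_pos_left (by linarith) pi_pos

theorem det_vandermonde_odd_pow_exp_pi_mul_I_div_eq_prod_sin {r : ℕ} (hr : 0 < r) :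
    (Matrix.vandermonde fun j : Fin r => exp (π * I / r) ^ (2 * (j : ℕ) + 1)).det =
      (-I) ^ (r * (r - 1) / 2) *
        ((∏ i : Fin r, ∏ j ∈ Ioi i, 2 * Real.sin (π * ((j : ℕ) - (i : ℕ)) / r) : ℝ) : ℂ) := by
  set c := r * (r - 1) / 2 with hc_def
  have hc : (c : ℂ) * 2 = r * (r - 1) := by
    have h := congrArg (Nat.cast : ℕ → ℂ) (Nat.div_mul_cancel (Nat.even_mul_pred_self r).two_dvd)
    push_cast [Nat.cast_sub hr] at h
    exact h
  have hr' : (r : ℂ) ≠ 0 := by exact_mod_cast hr.ne'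
  set θ : Fin r → ℝ := fun j => π * (2 * (j : ℕ) + 1) / r with hθ_def
  have hθ : (fun j : Fin r => exp (π * I / r) ^ (2 * (j : ℕ) + 1)) = fun j => exp (θ j * I) := by
    funext j
    rw [← Complex.exp_nat_mul]
    push_cast [hθ_def]
    ring_nf
  have hsum : ∑ j, θ j = π * (2 * c + r) / r := by
    have h : ∑ j : Fin r, ((j : ℕ) : ℝ) = c := by
      rw [Fin.sum_univ_eq_sum_range (fun j => (j : ℝ)) r, hc_def, ← sum_range_id]
      push_cast
      rfl
    simp only [hθ_def, ← sum_div, ← mul_sum, sum_add_distrib, ← mul_sum, h]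
    simp
  have hphase : exp ((∑ j, θ j : ℝ) / 2 * I) ^ (r - 1) = (-1) ^ c := by
    rw [← exp_pi_mul_I, ← Complex.exp_nat_mul, ← Complex.exp_nat_mul, hsum]
    congr 1
    push_cast [Nat.cast_sub hr]
    field_simp
    linear_combination -hc
  have hangle (i j : Fin r) : (θ j - θ i) / 2 = π * ((j : ℕ) - (i : ℕ)) / r := by
    simp only [hθ_def]
    ring
  rw [hθ, det_vandermonde_exp_mul_I, ← hc_def, hphase, neg_pow I, mul_comm ((-1 : ℂ) ^ c)]
  simp only [hangle]

theorem det_vandermonde_odd_pow_exp_pi_mul_I_div {r : ℕ} (hr : 0 < r) :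
    (Matrix.vandermonde fun j : Fin r => exp (π * I / r) ^ (2 * (j : ℕ) + 1)).det =
      I ^ (-((r * (r - 1) / 2 : ℕ) : ℤ)) * ((√r : ℝ) : ℂ) ^ r := by
  have hdet := det_vandermonde_odd_pow_exp_pi_mul_I_div_eq_prod_sin hr
  set T : ℝ := ∏ i : Fin r, ∏ j ∈ Ioi i, 2 * Real.sin (π * ((j : ℕ) - (i : ℕ)) / r)
  have hTsq : T ^ 2 = (r : ℝ) ^ r := by
    have h := congrArg Matrix.det (vandermonde_odd_pow_conjTranspose_mul_self
      (Complex.isPrimitiveRoot_exp_pi_mul_I_div r hr.ne') hr)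
    rw [Matrix.det_mul, Matrix.det_conjTranspose, Matrix.det_smul, Matrix.det_one,
      Fintype.card_fin, mul_one, hdet, star_mul', star_pow, star_neg, Complex.star_def, conj_I,
      neg_neg, conj_ofReal, mul_mul_mul_comm, ← mul_pow, mul_neg, I_mul_I, neg_neg, one_pow,
      one_mul] at h
    exact_mod_cast (by rw [sq]; exact h : (T : ℂ) ^ 2 = (r : ℂ) ^ r)
  have hT : T = √r ^ r := by
    rw [← pow_left_inj₀ (prod_prod_two_mul_sin_pos r).le (by positivity) two_ne_zero, hTsq,
      ← pow_mul, mul_comm, pow_mul, Real.sq_sqrt (Nat.cast_nonneg _)]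
  rw [hdet, hT, zpow_neg, zpow_natCast, ← inv_pow, inv_I]
  push_cast
  rfl

theorem exp_odd_pow_zpow_mul_inv_add_pow (M : ℂ) (k N : ℕ) (e : ℤ) (x : ℂ) :
    (exp (π * I / M) ^ (2 * k + 1)) ^ (-e) *
        (x * (exp (π * I / M) ^ (2 * k + 1))⁻¹ + exp (π * I / M) ^ (2 * k + 1)) ^ N
      = exp (π * I * (N - e * (2 * k + 1)) / M) *
          (x * exp (-2 * π * I * (k + 1) / M) + exp (2 * π * I * k / M)) ^ N := by
  have hN : exp (N * (π * I / M)) * exp (-(π * I / M)) ^ N = 1 := by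
    rw [← Complex.exp_nat_mul, ← Complex.exp_add, mul_neg, add_neg_cancel, Complex.exp_zero]
  have h1 : exp (π * I * (N - e * (2 * k + 1)) / M)
      = exp (N * (π * I / M)) * exp (-e * ((2 * k + 1 : ℕ) * (π * I / M))) := by
    rw [← Complex.exp_add]; push_cast; ring_nf
  have h2 : exp (-2 * π * I * (k + 1) / M)
      = exp (-(π * I / M)) * exp (-((2 * k + 1 : ℕ) * (π * I / M))) := by
    rw [← Complex.exp_add]; push_cast; ring_nf
  have h3 : exp (2 * π * I * k / M) = exp (-(π * I / M)) * exp ((2 * k + 1 : ℕ) * (π * I / M)) := by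
    rw [← Complex.exp_add]; push_cast; ring_nf
  rw [← Complex.exp_nat_mul, ← Complex.exp_int_mul, ← Complex.exp_neg, h1, h2, h3, Int.cast_neg,
    mul_left_comm x, ← mul_add, mul_pow]
  linear_combination (-(exp (-e * ((2 * k + 1 : ℕ) * (π * I / M))) *
    (x * exp (-((2 * k + 1 : ℕ) * (π * I / M))) + exp ((2 * k + 1 : ℕ) * (π * I / M))) ^ N)) * hN

/-- equidistant starting points `a i = i·ν`, `M = r·ν`, `r` even:
`det (q(rν,N,iν,e j;x,-1)) = i^(-r(r-1)/2) (ν√r)^(-r) det(…)`. -/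
theorem stmt13 (r ν : ℕ) (hr2 : 2 ≤ r) (hν : 1 ≤ ν) (N : ℕ) (x : ℂ)
    (e : Fin r → ℤ) :
    Matrix.det (Matrix.of fun i j : Fin r =>
        qxy (r * ν) N ((i : ℕ) * ν) (e j) x (-1))
      = Complex.I ^ (-(((r * (r - 1)) / 2 : ℕ) : ℤ)) *
          ((ν : ℂ) * (Real.sqrt r : ℂ)) ^ (-(r : ℤ)) *
          Matrix.det (Matrix.of fun i j : Fin r =>
            ∑ a ∈ Finset.range ν,
              Complex.exp (Real.pi * Complex.I *
                  ((N : ℂ) - (e j : ℂ) * (2 * (((i : ℕ) : ℂ) + (a : ℂ) * r) + 1)) /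
                  ((r : ℂ) * ν)) *
                (x * Complex.exp (-2 * Real.pi * Complex.I *
                      (((i : ℕ) : ℂ) + (a : ℂ) * r + 1) / ((r : ℂ) * ν)) +
                  Complex.exp (2 * Real.pi * Complex.I *
                      (((i : ℕ) : ℂ) + (a : ℂ) * r) / ((r : ℂ) * ν))) ^ N) := by
  have hr : 0 < r := by omega
  have hζ : IsPrimitiveRoot (exp (π * I / ((r : ℂ) * ν))) (2 * (r * ν)) := by
    simpa using Complex.isPrimitiveRoot_exp_pi_mul_I_div (r * ν) (by positivity)
  have hη : exp (π * I / ((r : ℂ) * ν)) ^ ν = exp (π * I / r) := by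
    have hν0 : (ν : ℂ) ≠ 0 := by exact_mod_cast (by omega : ν ≠ 0)
    rw [← Complex.exp_nat_mul]
    congr 1
    field_simp
  rw [qxy_matrix_eq_vandermonde_mul hζ hr hν N x e, hη, Matrix.det_mul, Matrix.det_transpose,
    det_vandermonde_odd_pow_exp_pi_mul_I_div hr, Matrix.det_smul, Fintype.card_fin]
  have hcoef : ((√r : ℝ) : ℂ) ^ r * ((r : ℂ) * ν)⁻¹ ^ r = ((ν : ℂ) * √r) ^ (-(r : ℤ)) := by
    have hs0 : ((√r : ℝ) : ℂ) ≠ 0 := by exact_mod_cast (Real.sqrt_pos.2 (by exact_mod_cast hr)).ne'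
    have hsq : ((√r : ℝ) : ℂ) * √r = r := by
      rw [← ofReal_mul, Real.mul_self_sqrt (Nat.cast_nonneg r), ofReal_natCast]
    rw [zpow_neg, zpow_natCast, ← mul_pow, ← inv_pow, ← hsq]
    field_simp
  simp only [exp_odd_pow_zpow_mul_inv_add_pow, Nat.cast_add, Nat.cast_mul, ← hcoef]
  ring
end

section
/- Let r ≥ 1 be an odd integer, ν ≥ 1 an integer, M = rν, N ≥ 0, x ∈ ℂ, and let e_0 < e_1 < … < e_{r−1} be integers with 0 ≤ e_0 and e_{r−1} < M such that N − e_j + iν ≡ 0 (mod 2) for all 0 ≤ i,j ≤ r−1. With equidistant starting points a_i = iν for 0 ≤ i ≤ r−1, one has det( q(rν, N, iν, e_j; x) )_{i,j=0}^{r−1} = i^{−(r+2)(r−1)/2} · (ν√r)^{−r} · det( Σ_{a=0}^{ν−1} exp( −2πi·e_j(i+ar)/(rν) ) · ( x·exp(−2πi(i+ar)/(rν)) + exp(2πi(i+ar)/(rν)) )^N )_{i,j=0}^{r−1}. -/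
open Finset Complex Real

/-! Writing `ω = exp(2πi/M)`, the filter `M⁻¹ ∑_{k<M} ω^{tk} = [M ∣ t]` turns `qx M N a e x` into
the discrete Fourier sum `M⁻¹ ∑_k ω^{(a-e)k} (x ω^{-k} + ω^k)^N`. For `M = rν`, starting point `iν`
and `k = m + a r`, the twist `ω^{iνk} = exp(2πi·im/r)` depends on `m` only, so the matrix of the
`qx` is `(rν)⁻¹ F B` with `F` the `r × r` discrete Fourier matrix and `B` the matrix on the right.

With `ζ = exp(2πi/r)`, Vandermonde gives
`det F = ∏_{i<j} (ζ^j - ζ^i) = ∏_{i<j} e^{πi(i+j)/r} · i · 2 sin(π(j-i)/r)`. For odd `r` the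
phases multiply to `1` and the sines are nonnegative, while `F Fᴴ = r·1` gives `|det F|² = r^r`;
hence `det F = i^{r(r-1)/2} √r^r`, and `i^{r(r-1)/2} = i^{-(r+2)(r-1)/2}` because the two
exponents add up to `r² - 1 ≡ 0 (mod 4)`. -/

open scoped Matrix

theorem sum_range_exp_two_pi_I_int_mul_div {M : ℕ} (hM : M ≠ 0) (t : ℤ) :
    ∑ k ∈ range M, exp (2 * π * I * t * k / M) = if (M : ℤ) ∣ t then (M : ℂ) else 0 := by
  have hζ := isPrimitiveRoot_exp M hM
  have hpow (k : ℕ) : exp (2 * π * I * t * k / M) = (exp (2 * π * I / M) ^ t) ^ k := by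
    rw [← Complex.exp_int_mul, ← Complex.exp_nat_mul]
    ring_nf
  simp_rw [hpow]
  split_ifs with h
  · simp [(hζ.zpow_eq_one_iff_dvd t).mpr h]
  · have hM1 : (exp (2 * π * I / M) ^ t) ^ M = 1 := by
      rw [← zpow_natCast, ← zpow_mul, mul_comm t, zpow_mul, zpow_natCast, hζ.pow_eq_one, one_zpow]
    rw [geom_sum_eq (mt (hζ.zpow_eq_one_iff_dvd t).mp h), hM1, sub_self, zero_div]

noncomputable def qxFourier (M : ℂ) (N : ℕ) (e : ℤ) (x k : ℂ) : ℂ :=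
  exp (-2 * π * I * e * k / M) * (x * exp (-2 * π * I * k / M) + exp (2 * π * I * k / M)) ^ N

theorem exp_mul_qxFourier (M : ℂ) (N : ℕ) (a e : ℤ) (x k : ℂ) :
    exp (2 * π * I * a * k / M) * qxFourier M N e x k =
      ∑ d ∈ range (N + 1), (N.choose d : ℂ) * x ^ d *
        exp (2 * π * I * ((a + N - 2 * d - e : ℤ) : ℂ) * k / M) := by
  rw [qxFourier, add_pow, mul_sum, mul_sum]
  refine sum_congr rfl fun d hd => ?_
  have hdN : d ≤ N := Nat.lt_succ_iff.mp (mem_range.mp hd)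
  rw [mul_pow, ← Complex.exp_nat_mul, ← Complex.exp_nat_mul, mul_comm (N.choose d : ℂ) (x ^ d)]
  calc _ = x ^ d * exp (2 * π * I * a * k / M + -2 * π * I * e * k / M +
          d * (-2 * π * I * k / M) + ((N - d : ℕ) : ℂ) * (2 * π * I * k / M)) * N.choose d := by
        simp only [Complex.exp_add]
        ring
    _ = _ := by
        push_cast [Nat.cast_sub hdN]
        ring_nf

theorem qx_eq_sum_exp_mul_qxFourier {M : ℕ} (hM : M ≠ 0) (N : ℕ) (a e : ℤ) (x : ℂ) :
    qx M N a e x =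
      (M : ℂ)⁻¹ * ∑ k ∈ range M, exp (2 * π * I * a * k / M) * qxFourier M N e x k := by
  simp_rw [exp_mul_qxFourier]
  rw [sum_comm]
  simp_rw [← mul_sum, sum_range_exp_two_pi_I_int_mul_div hM, qx, mul_sum]
  refine sum_congr rfl fun d _ => ?_
  split_ifs
  · field_simp
  · simp

theorem sum_range_mul_eq_sum_fin_sum_range {β : Type*} [AddCommMonoid β] (f : ℕ → β) (r ν : ℕ) :
    ∑ k ∈ range (r * ν), f k = ∑ m : Fin r, ∑ a ∈ range ν, f (m + a * r) := by
  rw [mul_comm, ← Fin.sum_univ_eq_sum_range, ← finProdFinEquiv.sum_comp, Fintype.sum_prod_type,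
    sum_comm]
  refine sum_congr rfl fun m _ => ?_
  rw [← Fin.sum_univ_eq_sum_range (fun a => f (m + a * r))]
  simp [mul_comm]

noncomputable def dftMatrix (r : ℕ) : Matrix (Fin r) (Fin r) ℂ :=
  Matrix.of fun i m => exp (2 * π * I * (i : ℕ) * (m : ℕ) / r)

theorem qx_matrix_eq_smul_dftMatrix_mul {r ν : ℕ} (hν : ν ≠ 0) (N : ℕ) (x : ℂ) (e : Fin r → ℤ) :
    Matrix.of (fun i j : Fin r => qx (r * ν) N ((i : ℕ) * ν) (e j) x) =
      ((r : ℂ) * ν)⁻¹ • (dftMatrix r * Matrix.of fun m j : Fin r =>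
        ∑ a ∈ range ν, qxFourier ((r : ℂ) * ν) N (e j) x (((m : ℕ) : ℂ) + (a : ℂ) * r)) := by
  ext i j
  have hr : r ≠ 0 := Fin.pos_iff_nonempty.mpr ⟨i⟩ |>.ne'
  rw [Matrix.of_apply, qx_eq_sum_exp_mul_qxFourier (mul_ne_zero hr hν),
    sum_range_mul_eq_sum_fin_sum_range, Matrix.smul_apply, Matrix.mul_apply, smul_eq_mul]
  push_cast
  congr 1
  refine sum_congr rfl fun m _ => ?_
  rw [dftMatrix, Matrix.of_apply, Matrix.of_apply, mul_sum]
  refine sum_congr rfl fun a _ => ?_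
  congr 1
  rw [Complex.exp_eq_exp_iff_exists_int]
  refine ⟨(i : ℕ) * a, ?_⟩
  field_simp
  push_cast
  ring

theorem dftMatrix_mul_conjTranspose (r : ℕ) : dftMatrix r * (dftMatrix r)ᴴ = (r : ℂ) • 1 := by
  ext i j
  have hr : r ≠ 0 := Fin.pos_iff_nonempty.mpr ⟨i⟩ |>.ne'
  have hterm (m : Fin r) : dftMatrix r i m * (dftMatrix r)ᴴ m j =
      exp (2 * π * I * (((i : ℕ) - (j : ℕ) : ℤ) : ℂ) * ((m : ℕ) : ℂ) / r) := by
    rw [dftMatrix, Matrix.conjTranspose_apply, Matrix.of_apply, Matrix.of_apply, Complex.star_def,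
      ← Complex.exp_conj, ← Complex.exp_add]
    congr 1
    simp only [map_div₀, map_mul, Complex.conj_I, Complex.conj_ofReal, map_ofNat, map_natCast]
    push_cast
    ring
  have hdvd : (r : ℤ) ∣ (i : ℕ) - (j : ℕ) ↔ i = j := by
    refine ⟨fun hd => Fin.ext ?_, fun h => by simp [h]⟩
    have := Int.eq_zero_of_abs_lt_dvd hd (by rw [abs_lt]; omega)
    omega
  rw [Matrix.mul_apply, sum_congr rfl fun m _ => hterm m,
    Fin.sum_univ_eq_sum_range (fun m => exp (2 * π * I * (((i : ℕ) - (j : ℕ) : ℤ) : ℂ) * m / r)),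
    sum_range_exp_two_pi_I_int_mul_div hr, Matrix.smul_apply, Matrix.one_apply]
  simp only [hdvd]
  split_ifs <;> simp

theorem normSq_det_dftMatrix (r : ℕ) : normSq (dftMatrix r).det = r ^ r := by
  have h := congrArg Matrix.det (dftMatrix_mul_conjTranspose r)
  rw [Matrix.det_mul, Matrix.det_conjTranspose, Matrix.det_smul, Matrix.det_one, mul_one,
    Fintype.card_fin, Complex.star_def, Complex.mul_conj] at h
  exact_mod_cast h

theorem exp_two_mul_I_sub_exp_two_mul_I (a b : ℝ) :
    exp (2 * b * I) - exp (2 * a * I) =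
      exp ((a + b) * I) * (I * ((2 * Real.sin (b - a) : ℝ) : ℂ)) := by
  have hb : exp (2 * b * I) = exp ((a + b) * I) * exp ((b - a) * I) := by
    rw [← Complex.exp_add]
    ring_nf
  have ha : exp (2 * a * I) = exp ((a + b) * I) * exp (-(b - a) * I) := by
    rw [← Complex.exp_add]
    ring_nf
  push_cast
  rw [hb, ha, Complex.sin]
  linear_combination exp ((a + b) * I) * (exp ((b - a) * I) - exp (-(b - a) * I)) * I_sq

theorem det_dftMatrix_eq_prod (r : ℕ) :
    (dftMatrix r).det = ∏ i : Fin r, ∏ j ∈ Ioi i,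
      exp ((π * (i : ℕ) / r + π * (j : ℕ) / r : ℝ) * I) *
        (I * ((2 * Real.sin (π * (j : ℕ) / r - π * (i : ℕ) / r) : ℝ) : ℂ)) := by
  have hV : dftMatrix r = Matrix.vandermonde fun i : Fin r => exp (2 * π * I * (i : ℕ) / r) := by
    ext i m
    rw [dftMatrix, Matrix.of_apply, Matrix.vandermonde_apply, ← Complex.exp_nat_mul]
    ring_nf
  rw [hV, Matrix.det_vandermonde]
  refine prod_congr rfl fun i _ => prod_congr rfl fun j _ => ?_
  rw [Complex.ofReal_add, ← exp_two_mul_I_sub_exp_two_mul_I]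
  congr 2 <;> push_cast <;> ring

theorem sum_sum_Ioi_add_eq (r : ℕ) :
    ∑ i : Fin r, ∑ j ∈ Ioi i, ((i : ℕ) + j) = (r - 1) * ∑ i : Fin r, (i : ℕ) := by
  simp_rw [sum_add_distrib]
  rw [sum_comm' (f := fun (_ j : Fin r) => (j : ℕ)) (t' := univ) (s' := fun j => Iio j)
      (fun i j => by simp [and_comm]), mul_sum, ← sum_add_distrib]
  refine sum_congr rfl fun i _ => ?_
  rw [sum_const, sum_const, Fin.card_Ioi, Fin.card_Iio, smul_eq_mul, smul_eq_mul, ← add_mul]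
  congr 1
  omega

theorem sum_card_Ioi_eq_sum_val (r : ℕ) : ∑ i : Fin r, #(Ioi i) = ∑ i : Fin r, (i : ℕ) := by
  rw [← Equiv.sum_comp Fin.revPerm (fun i : Fin r => (i : ℕ))]
  refine sum_congr rfl fun i _ => ?_
  rw [Fin.card_Ioi, Fin.revPerm_apply, Fin.val_rev]
  omega

theorem prod_prod_Ioi_exp_eq_one {r : ℕ} (hr : Odd r) :
    ∏ i : Fin r, ∏ j ∈ Ioi i, exp ((π * (i : ℕ) / r + π * (j : ℕ) / r : ℝ) * I) = 1 := by
  obtain ⟨s, hs⟩ := hr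
  have hval : ∑ i : Fin r, ∑ j ∈ Ioi i, ((i : ℕ) + (j : ℕ)) = 2 * s * ((2 * s + 1) * s) := by
    rw [sum_sum_Ioi_add_eq, Fin.sum_univ_eq_sum_range (fun i => i), sum_range_id, hs,
      Nat.add_sub_cancel, show (2 * s + 1) * (2 * s) = 2 * ((2 * s + 1) * s) by ring,
      Nat.mul_div_cancel_left _ two_pos]
  have hsum : ∑ i : Fin r, ∑ j ∈ Ioi i, ((π * (i : ℕ) / r + π * (j : ℕ) / r : ℝ) * I) =
      (s ^ 2 : ℤ) * (2 * π * I) :=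
    calc _ = (π / r * I : ℂ) * ((∑ i : Fin r, ∑ j ∈ Ioi i, ((i : ℕ) + (j : ℕ)) : ℕ) : ℂ) := by
          push_cast
          simp_rw [mul_sum]
          exact sum_congr rfl fun i _ => sum_congr rfl fun j _ => by ring
      _ = _ := by
          have hr0 : (2 * s + 1 : ℂ) ≠ 0 := by norm_cast
          rw [hval, hs]
          push_cast
          field_simp
  simp_rw [← Complex.exp_sum, hsum, Complex.exp_int_mul_two_pi_mul_I]

theorem prod_prod_Ioi_sin_nonneg (r : ℕ) :
    0 ≤ ∏ i : Fin r, ∏ j ∈ Ioi i, 2 * Real.sin (π * (j : ℕ) / r - π * (i : ℕ) / r) :=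
  prod_nonneg fun i _ => prod_nonneg fun j hj => by
    have hij : ((i : ℕ) : ℝ) < (j : ℕ) := by exact_mod_cast mem_Ioi.mp hj
    have hjr : ((j : ℕ) : ℝ) < r := by exact_mod_cast j.isLt
    have hr0 : (0 : ℝ) < r := by linarith [(i : ℕ).cast_nonneg (α := ℝ)]
    have := Real.sin_nonneg_of_nonneg_of_le_pi (x := π * (j : ℕ) / r - π * (i : ℕ) / r)
      (by rw [← sub_div, ← mul_sub]; positivity)
      (by rw [← sub_div, ← mul_sub, div_le_iff₀ hr0]; nlinarith [pi_pos])
    positivity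

theorem det_dftMatrix {r : ℕ} (hr : Odd r) :
    (dftMatrix r).det = I ^ (r * (r - 1) / 2) * ((√r ^ r : ℝ) : ℂ) := by
  set T : ℝ := ∏ i : Fin r, ∏ j ∈ Ioi i, 2 * Real.sin (π * (j : ℕ) / r - π * (i : ℕ) / r) with hT
  have hI : ∏ i : Fin r, ∏ _j ∈ Ioi i, I = I ^ (r * (r - 1) / 2) := by
    simp_rw [prod_const]
    rw [prod_pow_eq_pow_sum, sum_card_Ioi_eq_sum_val, Fin.sum_univ_eq_sum_range (fun i => i),
      sum_range_id]
  have hdet : (dftMatrix r).det = I ^ (r * (r - 1) / 2) * (T : ℂ) := by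
    rw [det_dftMatrix_eq_prod]
    simp_rw [prod_mul_distrib]
    rw [prod_prod_Ioi_exp_eq_one hr, hI, one_mul, hT, Complex.ofReal_prod]
    simp_rw [Complex.ofReal_prod]
  have hTT : T * T = √r ^ r * √r ^ r := by
    have h := normSq_det_dftMatrix r
    rw [hdet, normSq_mul, map_pow, normSq_I, one_pow, one_mul, normSq_ofReal] at h
    rw [h, ← mul_pow, Real.mul_self_sqrt r.cast_nonneg]
  rw [hdet, (mul_self_inj (show 0 ≤ T from prod_prod_Ioi_sin_nonneg r) (by positivity)).mp hTT]

theorem I_zpow_neg_eq_I_pow_of_odd {r : ℕ} (hr : Odd r) :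
    I ^ (-(((r + 2) * (r - 1) / 2 : ℕ) : ℤ)) = I ^ (r * (r - 1) / 2) := by
  obtain ⟨s, rfl⟩ := hr
  have hK : (2 * s + 1) * (2 * s + 1 - 1) / 2 = 2 * s ^ 2 + s := by
    rw [Nat.add_sub_cancel, show (2 * s + 1) * (2 * s) = 2 * (2 * s ^ 2 + s) by ring,
      Nat.mul_div_cancel_left _ two_pos]
  have hm : (2 * s + 1 + 2) * (2 * s + 1 - 1) / 2 = 2 * s ^ 2 + 3 * s := by
    rw [Nat.add_sub_cancel, show (2 * s + 1 + 2) * (2 * s) = 2 * (2 * s ^ 2 + 3 * s) by ring,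
      Nat.mul_div_cancel_left _ two_pos]
  rw [hK, hm, zpow_neg, zpow_natCast]
  refine inv_eq_of_mul_eq_one_left ?_
  rw [← pow_add, show 2 * s ^ 2 + s + (2 * s ^ 2 + 3 * s) = 4 * (s ^ 2 + s) by ring, pow_mul,
    I_pow_four, one_pow]

theorem inv_natCast_mul_mul_sqrt {r : ℕ} (hr : r ≠ 0) (ν : ℕ) :
    ((r : ℂ) * ν)⁻¹ * (√r : ℝ) = ((ν : ℂ) * (√r : ℝ))⁻¹ := by
  have hsq : ((√r : ℝ) : ℂ) * (√r : ℝ) = r := by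
    rw [← Complex.ofReal_mul, Real.mul_self_sqrt r.cast_nonneg, Complex.ofReal_natCast]
  have hsq0 : ((√r : ℝ) : ℂ) ≠ 0 := by
    intro h
    rw [h, zero_mul] at hsq
    exact hr (by exact_mod_cast hsq.symm)
  rw [← hsq]
  field_simp

/-- equidistant starting points `a i = i·ν`, `M = r·ν`, `r` odd:
`det (q(rν,N,iν,e j;x)) = i^(-(r+2)(r-1)/2) (ν√r)^(-r) det(…)`. -/
theorem stmt14 (r ν : ℕ) (hrodd : Odd r) (hν : 1 ≤ ν) (N : ℕ) (x : ℂ)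
    (e : Fin r → ℤ) :
    Matrix.det (Matrix.of fun i j : Fin r =>
        qx (r * ν) N ((i : ℕ) * ν) (e j) x)
      = Complex.I ^ (-((((r + 2) * (r - 1)) / 2 : ℕ) : ℤ)) *
          ((ν : ℂ) * (Real.sqrt r : ℂ)) ^ (-(r : ℤ)) *
          Matrix.det (Matrix.of fun i j : Fin r =>
            ∑ a ∈ Finset.range ν,
              Complex.exp (-2 * Real.pi * Complex.I *
                  (e j : ℂ) * (((i : ℕ) : ℂ) + (a : ℂ) * r) / ((r : ℂ) * ν)) *
                (x * Complex.exp (-2 * Real.pi * Complex.I *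
                      (((i : ℕ) : ℂ) + (a : ℂ) * r) / ((r : ℂ) * ν)) +
                  Complex.exp (2 * Real.pi * Complex.I *
                      (((i : ℕ) : ℂ) + (a : ℂ) * r) / ((r : ℂ) * ν))) ^ N) := by
  rw [qx_matrix_eq_smul_dftMatrix_mul (by omega) N x e, Matrix.det_smul, Matrix.det_mul,
    det_dftMatrix hrodd, Fintype.card_fin, I_zpow_neg_eq_I_pow_of_odd hrodd, zpow_neg,
    zpow_natCast, ← inv_pow, ← inv_natCast_mul_mul_sqrt hrodd.pos.ne', mul_pow,
    Complex.ofReal_pow]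
  unfold qxFourier
  ring
end
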